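/- arXiv:1205.2430 — 5 statements merged into one kernel-verified Lean document; each statement's English description precedes it below -/
import Mathlib

section
/- Let ψ be an N-function such that both ψ and ψ* satisfy the Δ₂-condition. Then ψ is of type (p₀, p₁) for some 1 < p₀ < p₁ < ∞, i.e. there is a constant C with ψ(st) ≤ C max{s^{p₀}, s^{p₁}} ψ(t) for all s, t ≥ 0, where p₀, p₁, C depend only on the Δ₂-constants of ψ and ψ*. -/
open Set Filter

def IsNFunction (ψ ψ' : ℝ → ℝ) : Prop :=
  ψ 0 = 0 ∧
  (∀ t ∈ Set.Ici (0:ℝ), HasDerivWithinAt ψ (ψ' t) (Set.Ici 0) t) ∧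
  MonotoneOn ψ' (Set.Ici 0) ∧
  (∀ t ∈ Set.Ici (0:ℝ), ContinuousWithinAt ψ' (Set.Ici t) t) ∧
  ψ' 0 = 0 ∧
  (∀ t > (0:ℝ), 0 < ψ' t) ∧
  Filter.Tendsto ψ' Filter.atTop Filter.atTop

noncomputable def conjFn (ψ : ℝ → ℝ) (t : ℝ) : ℝ :=
  sSup {y | ∃ s ≥ (0:ℝ), y = s * t - ψ s}

lemma tangent {ψ ψ' : ℝ → ℝ} (hN : IsNFunction ψ ψ') {u s : ℝ} (hu : 0 ≤ u) (hs : 0 ≤ s) :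
    ψ u + ψ' u * (s - u) ≤ ψ s := by
  obtain ⟨h0, hder, hmono, -, h'0, -, -⟩ := hN
  have hcont : ContinuousOn ψ (Set.Ici 0) := fun x hx => (hder x hx).continuousWithinAt
  rcases le_total u s with hus | hsu
  · have hmg : MonotoneOn (fun x => ψ x - ψ' u * x) (Set.Icc u s) := by
      apply monotoneOn_of_deriv_nonneg (convex_Icc u s)
      · exact (hcont.mono (Set.Icc_subset_Ici_self.trans (Set.Ici_subset_Ici.mpr hu))).sub
          (continuous_const.mul continuous_id).continuousOn
      · intro x hx
        rw [interior_Icc] at hx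
        have hx0 : 0 < x := lt_of_le_of_lt hu hx.1
        have hd : HasDerivAt ψ (ψ' x) x :=
          (hder x (le_of_lt hx0)).hasDerivAt (Ici_mem_nhds hx0)
        exact (hd.sub ((hasDerivAt_id x).const_mul (ψ' u))).differentiableAt.differentiableWithinAt
      · intro x hx
        rw [interior_Icc] at hx
        have hx0 : 0 < x := lt_of_le_of_lt hu hx.1
        have hd : HasDerivAt ψ (ψ' x) x :=
          (hder x (le_of_lt hx0)).hasDerivAt (Ici_mem_nhds hx0)
        have hd2 : HasDerivAt (fun x => ψ x - ψ' u * x) (ψ' x - ψ' u * 1) x :=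
          hd.sub ((hasDerivAt_id x).const_mul (ψ' u))
        rw [hd2.deriv, mul_one, sub_nonneg]
        exact hmono hu (le_trans hu (le_of_lt hx.1)) (le_of_lt hx.1)
    have := hmg (Set.left_mem_Icc.mpr hus) (Set.right_mem_Icc.mpr hus) hus
    simp only [mul_sub] at *
    linarith
  · have hmg : MonotoneOn (fun x => ψ' u * x - ψ x) (Set.Icc s u) := by
      apply monotoneOn_of_deriv_nonneg (convex_Icc s u)
      · exact ((continuous_const.mul continuous_id).continuousOn).sub
          (hcont.mono (Set.Icc_subset_Ici_self.trans (Set.Ici_subset_Ici.mpr hs)))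
      · intro x hx
        rw [interior_Icc] at hx
        have hx0 : 0 < x := lt_of_le_of_lt hs hx.1
        have hd : HasDerivAt ψ (ψ' x) x :=
          (hder x (le_of_lt hx0)).hasDerivAt (Ici_mem_nhds hx0)
        exact (((hasDerivAt_id x).const_mul (ψ' u)).sub hd).differentiableAt.differentiableWithinAt
      · intro x hx
        rw [interior_Icc] at hx
        have hx0 : 0 < x := lt_of_le_of_lt hs hx.1
        have hd : HasDerivAt ψ (ψ' x) x :=
          (hder x (le_of_lt hx0)).hasDerivAt (Ici_mem_nhds hx0)
        have hd2 : HasDerivAt (fun x => ψ' u * x - ψ x) (ψ' u * 1 - ψ' x) x :=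
          ((hasDerivAt_id x).const_mul (ψ' u)).sub hd
        rw [hd2.deriv, mul_one, sub_nonneg]
        exact hmono (le_trans hs (le_of_lt hx.1)) hu (le_of_lt hx.2)
    have := hmg (Set.left_mem_Icc.mpr hsu) (Set.right_mem_Icc.mpr hsu) hsu
    simp only [mul_sub] at *
    linarith

lemma psi_nonneg {ψ ψ' : ℝ → ℝ} (hN : IsNFunction ψ ψ') {s : ℝ} (hs : 0 ≤ s) : 0 ≤ ψ s := by
  have h := tangent hN le_rfl hs
  rw [hN.1, hN.2.2.2.2.1] at h
  linarith

lemma deriv_nonneg' {ψ ψ' : ℝ → ℝ} (hN : IsNFunction ψ ψ') {u : ℝ} (hu : 0 ≤ u) : 0 ≤ ψ' u := by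
  have := hN.2.2.1 (Set.self_mem_Ici) hu hu
  rw [hN.2.2.2.2.1] at this; exact this

lemma psi_mono {ψ ψ' : ℝ → ℝ} (hN : IsNFunction ψ ψ') {a b : ℝ} (ha : 0 ≤ a) (hab : a ≤ b) :
    ψ a ≤ ψ b := by
  have h := tangent hN ha (le_trans ha hab)
  have h2 := deriv_nonneg' hN ha
  nlinarith

lemma bddAbove_conjSet {ψ ψ' : ℝ → ℝ} (hN : IsNFunction ψ ψ') (v : ℝ) :
    BddAbove {y | ∃ s ≥ (0:ℝ), y = s * v - ψ s} := by
  obtain ⟨w, hw1, hw2⟩ := ((hN.2.2.2.2.2.2.eventually_ge_atTop v).and (eventually_ge_atTop (0:ℝ))).exists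
  refine ⟨ψ' w * w, ?_⟩
  rintro y ⟨s, hs, rfl⟩
  have ht := tangent hN hw2 hs
  have hpw := psi_nonneg hN hw2
  nlinarith [mul_nonneg hs (sub_nonneg.mpr hw1)]

lemma zero_mem_conjSet {ψ ψ' : ℝ → ℝ} (hN : IsNFunction ψ ψ') (v : ℝ) :
    (0:ℝ) ∈ {y | ∃ s ≥ (0:ℝ), y = s * v - ψ s} :=
  ⟨0, le_rfl, by rw [hN.1]; ring⟩

lemma conj_ge {ψ ψ' : ℝ → ℝ} (hN : IsNFunction ψ ψ') (v : ℝ) {s : ℝ} (hs : 0 ≤ s) :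
    s * v - ψ s ≤ conjFn ψ v :=
  le_csSup (bddAbove_conjSet hN v) ⟨s, hs, rfl⟩

lemma conj_nonneg {ψ ψ' : ℝ → ℝ} (hN : IsNFunction ψ ψ') (v : ℝ) : 0 ≤ conjFn ψ v := by
  have h := conj_ge hN v (le_refl 0)
  rw [hN.1] at h; linarith

lemma conj_deriv_le {ψ ψ' : ℝ → ℝ} (hN : IsNFunction ψ ψ') {u : ℝ} (hu : 0 ≤ u) :
    conjFn ψ (ψ' u) ≤ u * ψ' u - ψ u := by
  apply csSup_le ⟨0, zero_mem_conjSet hN _⟩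
  rintro y ⟨s, hs, rfl⟩
  have := tangent hN hu hs
  nlinarith

-- the ∇₂ step
lemma nabla2 {ψ ψ' : ℝ → ℝ} (hN : IsNFunction ψ ψ') {Ks : ℝ} (hKs : 0 ≤ Ks)
    (hΔs : ∀ t ≥ (0:ℝ), conjFn ψ (2 * t) ≤ Ks * conjFn ψ t)
    {u : ℝ} (hu : 0 ≤ u) : Ks * ψ u ≤ ψ (Ks / 2 * u) := by
  have hd0 : 0 ≤ ψ' u := deriv_nonneg' hN hu
  have h1 := conj_ge hN (2 * ψ' u) (s := Ks / 2 * u) (by positivity)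
  have h2 := hΔs (ψ' u) hd0
  have h3 := conj_deriv_le hN hu
  nlinarith

lemma rpow_logb_comm {a c : ℝ} (b : ℝ) (ha : 0 < a) (hc : 0 < c) :
    a ^ Real.logb b c = c ^ Real.logb b a := by
  rw [Real.rpow_def_of_pos ha, Real.rpow_def_of_pos hc, Real.logb, Real.logb]
  congr 1; ring

/-- If `ψ` and `ψ*` satisfy the `Δ₂`-condition, then `ψ` is of type `(p₀, p₁)` for
some `1 < p₀ < p₁ < ∞`: `ψ(s t) ≤ C max (s^{p₀}) (s^{p₁}) ψ(t)` for all `s, t ≥ 0`,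
with `p₀, p₁, C` depending only on the `Δ₂`-constants. -/
theorem type_p0_p1 (K Ks : ℝ) (hK : 0 < K) (hKs : 0 < Ks) :
    ∃ p₀ p₁ : ℝ, 1 < p₀ ∧ p₀ < p₁ ∧ ∃ C : ℝ, 0 < C ∧
      ∀ ψ ψ' : ℝ → ℝ, IsNFunction ψ ψ' →
        (∀ t ≥ (0:ℝ), ψ (2 * t) ≤ K * ψ t) →
        (∀ t ≥ (0:ℝ), conjFn ψ (2 * t) ≤ Ks * conjFn ψ t) →
        ∀ s ≥ (0:ℝ), ∀ t ≥ (0:ℝ), ψ (s * t) ≤ C * max (s ^ p₀) (s ^ p₁) * ψ t := by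
  set K' : ℝ := max K 4 with hK'def
  set Ks' : ℝ := max Ks 4 with hKs'def
  set L : ℝ := Ks' / 2 with hLdef
  have hK'4 : (4:ℝ) ≤ K' := le_max_right _ _
  have hKs'4 : (4:ℝ) ≤ Ks' := le_max_right _ _
  have hL2 : (2:ℝ) ≤ L := by rw [hLdef]; linarith
  have hKp : (0:ℝ) < K' := by linarith
  have hKsp : (0:ℝ) < Ks' := by linarith
  have hLp : (0:ℝ) < L := by linarith
  have hL1 : (1:ℝ) < L := by linarith
  have hLne : L ≠ 1 := by linarith
  set p₀ : ℝ := Real.logb L Ks' with hp₀def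
  set p₁ : ℝ := Real.logb 2 K' + 1 with hp₁def
  -- p₀ ∈ (1,2]
  have hlogL : 0 < Real.log L := Real.log_pos hL1
  have hlog2 : 0 < Real.log 2 := Real.log_pos one_lt_two
  have h2L : Real.log 2 ≤ Real.log L := Real.log_le_log (by norm_num) hL2
  have hlogKs' : Real.log Ks' = Real.log 2 + Real.log L := by
    rw [show Ks' = 2 * L by rw [hLdef]; ring, Real.log_mul (by norm_num) (by linarith)]
  have hp₀1 : 1 < p₀ := by
    rw [hp₀def, Real.logb, hlogKs', lt_div_iff₀ hlogL]; linarith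
  have hp₀2 : p₀ ≤ 2 := by
    rw [hp₀def, Real.logb, hlogKs', div_le_iff₀ hlogL]; linarith
  -- p₁ ≥ 3
  have hlogbK' : 2 ≤ Real.logb 2 K' := by
    rw [Real.le_logb_iff_rpow_le one_lt_two (by linarith)]
    rw [show (2:ℝ) = ((2:ℕ):ℝ) by norm_num, Real.rpow_natCast]
    norm_num; linarith
  have hp₁3 : 3 ≤ p₁ := by rw [hp₁def]; linarith
  refine ⟨p₀, p₁, hp₀1, by linarith, max K' Ks', by positivity, ?_⟩
  intro ψ ψ' hN hΔ hΔs s hs t ht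
  have hψt : 0 ≤ ψ t := psi_nonneg hN ht
  have hΔ' : ∀ u ≥ (0:ℝ), ψ (2 * u) ≤ K' * ψ u := fun u hu =>
    (hΔ u hu).trans (mul_le_mul_of_nonneg_right (le_max_left _ _) (psi_nonneg hN hu))
  have hΔs' : ∀ u ≥ (0:ℝ), conjFn ψ (2 * u) ≤ Ks' * conjFn ψ u := fun u hu =>
    (hΔs u hu).trans (mul_le_mul_of_nonneg_right (le_max_left _ _) (conj_nonneg hN u))
  have hnab : ∀ u, 0 ≤ u → Ks' * ψ u ≤ ψ (L * u) := fun u hu => by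
    have := nabla2 hN hKsp.le hΔs' hu
    rwa [← hLdef] at this
  have iter_up : ∀ n : ℕ, ∀ u, 0 ≤ u → ψ ((2:ℝ)^n * u) ≤ K'^n * ψ u := by
    intro n
    induction n with
    | zero => intro u hu; simp
    | succ n ih =>
      intro u hu
      rw [show (2:ℝ)^(n+1) * u = 2 * ((2:ℝ)^n * u) by ring]
      calc ψ (2 * ((2:ℝ)^n * u)) ≤ K' * ψ ((2:ℝ)^n * u) := hΔ' _ (by positivity)
        _ ≤ K' * (K'^n * ψ u) := mul_le_mul_of_nonneg_left (ih u hu) hKp.le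
        _ = K'^(n+1) * ψ u := by ring
  have iter_down : ∀ n : ℕ, ∀ u, 0 ≤ u → Ks'^n * ψ u ≤ ψ (L^n * u) := by
    intro n
    induction n with
    | zero => intro u hu; simp
    | succ n ih =>
      intro u hu
      rw [show L^(n+1) * u = L * (L^n * u) by ring]
      calc Ks'^(n+1) * ψ u = Ks' * (Ks'^n * ψ u) := by ring
        _ ≤ Ks' * ψ (L^n * u) := mul_le_mul_of_nonneg_left (ih u hu) hKsp.le
        _ ≤ ψ (L * (L^n * u)) := hnab _ (by positivity)
  rcases eq_or_lt_of_le hs with h0 | hs0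
  · -- s = 0
    rw [← h0, zero_mul, hN.1, Real.zero_rpow (by linarith : p₀ ≠ 0),
      Real.zero_rpow (by linarith : p₁ ≠ 0)]
    simp
  rcases le_or_gt 1 s with hs1 | hs1
  · -- s ≥ 1
    set n : ℕ := ⌈Real.logb 2 s⌉₊ with hndef
    have hlb0 : 0 ≤ Real.logb 2 s := Real.logb_nonneg one_lt_two hs1
    have h2n : s ≤ (2:ℝ)^n := by
      calc s = (2:ℝ) ^ Real.logb 2 s := (Real.rpow_logb two_pos (by norm_num) hs0).symm
        _ ≤ (2:ℝ) ^ ((n:ℕ):ℝ) := Real.rpow_le_rpow_of_exponent_le one_le_two (Nat.le_ceil _)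
        _ = (2:ℝ)^n := Real.rpow_natCast 2 n
    have step1 : ψ (s * t) ≤ K'^n * ψ t := by
      calc ψ (s * t) ≤ ψ ((2:ℝ)^n * t) :=
            psi_mono hN (by positivity) (mul_le_mul_of_nonneg_right h2n ht)
        _ ≤ K'^n * ψ t := iter_up n t ht
    have step2 : (K':ℝ)^n ≤ K' * s ^ p₁ := by
      have hc : ((n:ℕ):ℝ) ≤ Real.logb 2 s + 1 := (Nat.ceil_lt_add_one hlb0).le
      calc (K':ℝ)^n = K' ^ ((n:ℕ):ℝ) := (Real.rpow_natCast K' n).symm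
        _ ≤ K' ^ (Real.logb 2 s + 1) :=
            Real.rpow_le_rpow_of_exponent_le (by linarith) hc
        _ = K' ^ Real.logb 2 s * K' := by
            rw [Real.rpow_add hKp, Real.rpow_one]
        _ = s ^ Real.logb 2 K' * K' := by rw [rpow_logb_comm 2 hKp hs0]
        _ ≤ s ^ p₁ * K' := by
            have := Real.rpow_le_rpow_of_exponent_le hs1 (by rw [hp₁def]; linarith :
              Real.logb 2 K' ≤ p₁)
            nlinarith
        _ = K' * s ^ p₁ := by ring
    have hfin : K' * s ^ p₁ ≤ max K' Ks' * max (s ^ p₀) (s ^ p₁) :=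
      mul_le_mul (le_max_left _ _) (le_max_right _ _) (Real.rpow_nonneg hs p₁) (by positivity)
    calc ψ (s * t) ≤ K'^n * ψ t := step1
      _ ≤ (K' * s ^ p₁) * ψ t := mul_le_mul_of_nonneg_right step2 hψt
      _ ≤ max K' Ks' * max (s ^ p₀) (s ^ p₁) * ψ t := mul_le_mul_of_nonneg_right hfin hψt
  · -- 0 < s < 1
    set x : ℝ := Real.logb L s⁻¹ with hxdef
    have hx : 0 < x := Real.logb_pos hL1 ((one_lt_inv₀ hs0).mpr hs1)
    set n : ℕ := ⌈x⌉₊ with hndef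
    have hn1 : 1 ≤ n := Nat.one_le_iff_ne_zero.mpr (by positivity)
    set m : ℕ := n - 1 with hmdef
    have hmcast : ((m:ℕ):ℝ) = (n:ℝ) - 1 := by
      rw [hmdef, Nat.cast_sub hn1, Nat.cast_one]
    have hmlex : ((m:ℕ):ℝ) ≤ x := by
      have := Nat.ceil_lt_add_one hx.le
      rw [hmcast]; rw [hndef] at *; linarith
    have hmgex : x - 1 ≤ ((m:ℕ):ℝ) := by
      have := Nat.le_ceil x
      rw [hmcast]; linarith
    have hLm : L^m ≤ s⁻¹ := by
      calc L^m = L ^ ((m:ℕ):ℝ) := (Real.rpow_natCast L m).symm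
        _ ≤ L ^ x := Real.rpow_le_rpow_of_exponent_le hL1.le hmlex
        _ = s⁻¹ := Real.rpow_logb hLp hLne (by positivity)
    have hLmpos : (0:ℝ) < L^m := by positivity
    have hsLm : s ≤ (L^m)⁻¹ := by
      simpa [inv_inv] using inv_anti₀ hLmpos hLm
    have step1 : ψ (s * t) ≤ ψ ((L^m)⁻¹ * t) :=
      psi_mono hN (by positivity) (mul_le_mul_of_nonneg_right hsLm ht)
    have step2 : Ks'^m * ψ ((L^m)⁻¹ * t) ≤ ψ t := by
      have := iter_down m ((L^m)⁻¹ * t) (by positivity)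
      rwa [show L^m * ((L^m)⁻¹ * t) = t by field_simp] at this
    have hKsm : (0:ℝ) < Ks'^m := by positivity
    have step3 : ψ ((L^m)⁻¹ * t) ≤ (Ks'^m)⁻¹ * ψ t := by
      rw [le_inv_mul_iff₀ hKsm]; linarith [step2]
    have step4 : ((Ks':ℝ)^m)⁻¹ ≤ Ks' * s ^ p₀ := by
      calc ((Ks':ℝ)^m)⁻¹ = Ks' ^ (-((m:ℕ):ℝ)) := by
            rw [Real.rpow_neg hKsp.le, Real.rpow_natCast]
        _ ≤ Ks' ^ (1 - x) := Real.rpow_le_rpow_of_exponent_le (by linarith) (by linarith)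
        _ = Ks' * Ks' ^ (-x) := by
            rw [show (1:ℝ) - x = 1 + (-x) by ring, Real.rpow_add hKsp, Real.rpow_one]
        _ = Ks' * Ks' ^ (Real.logb L s) := by
            rw [hxdef, Real.logb_inv]; ring_nf
        _ = Ks' * s ^ p₀ := by rw [rpow_logb_comm L hKsp hs0, hp₀def]
    have hsp₀ : (0:ℝ) ≤ s ^ p₀ := Real.rpow_nonneg hs p₀
    have hfin : Ks' * s ^ p₀ ≤ max K' Ks' * max (s ^ p₀) (s ^ p₁) :=
      mul_le_mul (le_max_right _ _) (le_max_left _ _) hsp₀ (by positivity)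
    calc ψ (s * t) ≤ (Ks'^m)⁻¹ * ψ t := step1.trans step3
      _ ≤ (Ks' * s ^ p₀) * ψ t := mul_le_mul_of_nonneg_right step4 hψt
      _ ≤ max K' Ks' * max (s ^ p₀) (s ^ p₁) * ψ t := mul_le_mul_of_nonneg_right hfin hψt
end

section
/- Let φ be an N-function such that φ and φ* satisfy the Δ₂-condition. Then uniformly for all P₀, P₁ ∈ ℝ^{N×n} with |P₀| + |P₁| > 0, ∫₀¹ φ'(|P_θ|)/|P_θ| dθ ∼ φ'(|P₀| + |P₁|)/(|P₀| + |P₁|), where P_θ := (1−θ)P₀ + θP₁ and the implicit constants depend only on the Δ₂-constants of φ and φ*. -/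
open Set Filter MeasureTheory

open scoped Interval

/-! If `φ*` satisfies `Δ₂`, testing `φ*(2φ'(t))` at `L t` with `L = 2Ks + 2` shows
`φ'(L t) ≥ (3/2) φ'(t)`; iterating gives `φ'(u) ≤ (3/2) (u/a)^δ φ'(a)` for `u ≤ a`, with
`δ = log (3/2) / log L ∈ (0, 1)`. With `M = |P₀| + |P₁|` and `θ₀ = |P₀| / M` one has
`M |θ - θ₀| ≤ |P_θ| ≤ M`, so the integrand is at most `(3/2) (φ'(M)/M) |θ - θ₀|^(δ-1)`, which
is integrable. Conversely `|P_θ| ≥ M/4` on a quarter of `[0, 1]`, and `Δ₂` for `φ` gives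
`φ'(M) ≤ (K³/4) φ'(M/4)`. -/

section AbsRpow

variable {r : ℝ}

lemma intervalIntegrable_abs_rpow (hr : -1 < r) (a b : ℝ) :
    IntervalIntegrable (fun x => |x| ^ r) volume a b := by
  have hpos : ∀ c, 0 ≤ c → IntervalIntegrable (fun x => |x| ^ r) volume 0 c := fun c hc =>
    (intervalIntegrable_congr fun x hx => by
      rw [uIoc_of_le hc] at hx; rw [abs_of_pos hx.1]).2
      (intervalIntegral.intervalIntegrable_rpow' hr)
  have hall : ∀ c, IntervalIntegrable (fun x => |x| ^ r) volume 0 c := by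
    intro c
    rcases le_total 0 c with hc | hc
    · exact hpos c hc
    · rw [IntervalIntegrable.iff_comp_neg]
      simpa using hpos (-c) (by linarith)
  exact (hall a).symm.trans (hall b)

lemma integral_abs_rpow_of_nonneg (hr : -1 < r) {b : ℝ} (hb : 0 ≤ b) :
    ∫ x in (0:ℝ)..b, |x| ^ r = b ^ (r + 1) / (r + 1) := by
  rw [intervalIntegral.integral_congr (g := fun x => x ^ r) fun x hx => by
      rw [uIcc_of_le hb] at hx; rw [abs_of_nonneg hx.1],
    integral_rpow (Or.inl hr), Real.zero_rpow (by linarith), sub_zero]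

lemma integral_abs_rpow (hr : -1 < r) {a b : ℝ} (ha : a ≤ 0) (hb : 0 ≤ b) :
    ∫ x in a..b, |x| ^ r = ((-a) ^ (r + 1) + b ^ (r + 1)) / (r + 1) := by
  have hneg : ∫ x in a..0, |x| ^ r = (-a) ^ (r + 1) / (r + 1) := by
    have h := intervalIntegral.integral_comp_neg (a := a) (b := 0) (fun x => |x| ^ r)
    simp only [abs_neg, neg_zero] at h
    rw [h, integral_abs_rpow_of_nonneg hr (neg_nonneg.2 ha)]
  rw [← intervalIntegral.integral_add_adjacent_intervals (b := 0)
    (intervalIntegrable_abs_rpow hr _ _) (intervalIntegrable_abs_rpow hr _ _), hneg,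
    integral_abs_rpow_of_nonneg hr hb, add_div]

lemma integral_le_of_le_mul_abs_sub_rpow {f : ℝ → ℝ} {c B : ℝ} (hr : -1 < r)
    (hc : c ∈ Icc (0:ℝ) 1) (hB : 0 ≤ B)
    (hfm : AEStronglyMeasurable f (volume.restrict (Ι 0 1))) (hf0 : ∀ x ∈ Icc (0:ℝ) 1, 0 ≤ f x)
    (hfB : ∀ x ∈ Icc (0:ℝ) 1, x ≠ c → f x ≤ B * |x - c| ^ r) :
    IntervalIntegrable f volume 0 1 ∧ ∫ x in (0:ℝ)..1, f x ≤ 2 * B / (r + 1) := by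
  have hg : IntervalIntegrable (fun x => B * |x - c| ^ r) volume 0 1 := by
    simpa using ((intervalIntegrable_abs_rpow hr (0 - c) (1 - c)).comp_sub_right c).const_mul B
  have hfg : ∀ᵐ x ∂volume.restrict (Icc 0 1), 0 ≤ f x ∧ f x ≤ B * |x - c| ^ r := by
    filter_upwards [ae_restrict_mem measurableSet_Icc, (volume.restrict _).ae_ne c] with x hx hxc
    exact ⟨hf0 x hx, hfB x hx hxc⟩
  have hf : IntervalIntegrable f volume 0 1 := by
    refine hg.mono_fun' hfm (ae_restrict_of_ae_restrict_of_subset ?_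
      (hfg.mono fun x hx => (Real.norm_of_nonneg hx.1).trans_le hx.2))
    rw [uIoc_of_le zero_le_one]
    exact Ioc_subset_Icc_self
  refine ⟨hf, ?_⟩
  calc ∫ x in (0:ℝ)..1, f x ≤ ∫ x in (0:ℝ)..1, B * |x - c| ^ r :=
        intervalIntegral.integral_mono_ae_restrict zero_le_one hf hg (hfg.mono fun _ hx => hx.2)
    _ = B * ((c ^ (r + 1) + (1 - c) ^ (r + 1)) / (r + 1)) := by
        rw [intervalIntegral.integral_const_mul,
          intervalIntegral.integral_comp_sub_right (fun x => |x| ^ r),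
          integral_abs_rpow hr (by linarith [hc.1]) (by linarith [hc.2]), neg_sub, sub_zero]
    _ ≤ B * ((1 + 1) / (r + 1)) := by
        gcongr
        · linarith
        · exact Real.rpow_le_one hc.1 hc.2 (by linarith)
        · exact Real.rpow_le_one (by linarith [hc.2]) (by linarith [hc.1]) (by linarith)
    _ = 2 * B / (r + 1) := by ring

end AbsRpow

lemma div_four_le_integral_of_le_away {f : ℝ → ℝ} {c m : ℝ}
    (hf : IntervalIntegrable f volume 0 1) (hf0 : ∀ x ∈ Icc (0:ℝ) 1, 0 ≤ f x)
    (hm : ∀ x ∈ Icc (0:ℝ) 1, 1 / 4 ≤ |x - c| → m ≤ f x) :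
    m / 4 ≤ ∫ x in (0:ℝ)..1, f x := by
  obtain ⟨a, ha0, ha1, hfar⟩ : ∃ a : ℝ, 0 ≤ a ∧ a + 1 / 4 ≤ 1 ∧
      ∀ x ∈ Icc a (a + 1 / 4), 1 / 4 ≤ |x - c| := by
    rcases le_total c (1 / 2) with h | h
    · exact ⟨3 / 4, by norm_num, by norm_num,
        fun x hx => le_abs.2 (Or.inl (by linarith [hx.1]))⟩
    · exact ⟨0, le_rfl, by norm_num, fun x hx => le_abs.2 (Or.inr (by linarith [hx.2]))⟩
  have hsub : Icc a (a + 1 / 4) ⊆ Icc 0 1 := Icc_subset_Icc ha0 ha1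
  calc m / 4 = ∫ _ in a..a + 1 / 4, m := by
        rw [intervalIntegral.integral_const, smul_eq_mul]; ring
    _ ≤ ∫ x in a..a + 1 / 4, f x := by
        refine intervalIntegral.integral_mono_on (by linarith) intervalIntegrable_const
          (hf.mono_set ?_) fun x hx => hm x (hsub hx) (hfar x hx)
        rwa [uIcc_of_le (by linarith), uIcc_of_le zero_le_one]
    _ ≤ ∫ x in (0:ℝ)..1, f x :=
        intervalIntegral.integral_mono_interval ha0 (by linarith) ha1
          ((ae_restrict_mem measurableSet_Ioc).mono fun x hx => hf0 x (Ioc_subset_Icc_self hx))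
          hf

lemma MonotoneOn.le_mul_rpow_of_growth {f : ℝ → ℝ} (hf : MonotoneOn f (Ici 0)) {q L : ℝ}
    (hq : 1 < q) (hL : 1 < L) (hgrowth : ∀ t ≥ (0:ℝ), q * f t ≤ f (L * t)) {u a : ℝ}
    (hu : 0 < u) (hua : u ≤ a) (hfu : 0 ≤ f u) :
    f u ≤ q * (u / a) ^ (Real.log q / Real.log L) * f a := by
  set δ := Real.log q / Real.log L
  have ha : 0 < a := hu.trans_le hua
  have hLδ : L ^ δ = q := by
    rw [Real.rpow_def_of_pos (by linarith), mul_div_cancel₀ _ (Real.log_pos hL).ne',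
      Real.exp_log (by linarith)]
  have hiter : ∀ k : ℕ, q ^ k * f u ≤ f (L ^ k * u) := by
    intro k
    induction k with
    | zero => simp
    | succ k ih =>
      calc q ^ (k + 1) * f u = q * (q ^ k * f u) := by ring
        _ ≤ q * f (L ^ k * u) := by gcongr
        _ ≤ f (L * (L ^ k * u)) := hgrowth _ (by positivity)
        _ = f (L ^ (k + 1) * u) := by ring_nf
  obtain ⟨k, hk, hk'⟩ := exists_nat_pow_near ((one_le_div hu).2 hua) hL
  have hpow : (a / u) ^ δ ≤ q ^ (k + 1) := by
    calc (a / u) ^ δ ≤ (L ^ (k + 1)) ^ δ :=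
          Real.rpow_le_rpow (by positivity) hk'.le
            (div_nonneg (Real.log_nonneg hq.le) (Real.log_nonneg hL.le))
      _ = q ^ (k + 1) := by rw [← Real.rpow_pow_comm (by linarith), hLδ]
  have hmono : f (L ^ k * u) ≤ f a :=
    hf (mem_Ici.2 (by positivity)) (mem_Ici.2 ha.le) ((le_div_iff₀ hu).1 hk)
  have hone : (a / u) ^ δ * (u / a) ^ δ = 1 := by
    rw [← Real.mul_rpow (by positivity) (by positivity), div_mul_div_cancel₀ hu.ne',
      div_self ha.ne', Real.one_rpow]
  calc f u = f u * (a / u) ^ δ * (u / a) ^ δ := by rw [mul_assoc, hone, mul_one]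
    _ ≤ f u * q ^ (k + 1) * (u / a) ^ δ := by gcongr
    _ = q * (q ^ k * f u) * (u / a) ^ δ := by ring
    _ ≤ q * f a * (u / a) ^ δ := by gcongr; exact (hiter k).trans hmono
    _ = q * (u / a) ^ δ * f a := by ring

lemma MonotoneOn.measurable_comp_of_nonneg {f : ℝ → ℝ} (hf : MonotoneOn f (Ici 0))
    {α : Type*} [MeasurableSpace α] {g : α → ℝ} (hg : Measurable g)
    (hg0 : ∀ x, 0 ≤ g x) :
    Measurable fun x => f (g x) := by
  have hmono : Monotone fun t => f (max t 0) := fun s t hst =>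
    hf (le_max_right s 0) (le_max_right t 0) (max_le_max hst le_rfl)
  convert hmono.measurable.comp hg using 1
  funext x
  simp only [Function.comp_apply, max_eq_left (hg0 x)]

lemma le_pow_mul_of_doubling {f : ℝ → ℝ} {K : ℝ} (hK : 0 ≤ K)
    (hΔ : ∀ t ≥ (0:ℝ), f (2 * t) ≤ K * f t) (k : ℕ) {t : ℝ} (ht : 0 ≤ t) :
    f (2 ^ k * t) ≤ K ^ k * f t := by
  induction k with
  | zero => simp
  | succ k ih =>
    calc f (2 ^ (k + 1) * t) = f (2 * (2 ^ k * t)) := by ring_nf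
      _ ≤ K * f (2 ^ k * t) := hΔ _ (by positivity)
      _ ≤ K * (K ^ k * f t) := by gcongr
      _ = K ^ (k + 1) * f t := by ring

section Segment

variable {E : Type*} [NormedAddCommGroup E] [NormedSpace ℝ E] {x y : E} {θ : ℝ}

lemma norm_sub_smul_add_smul_le (hθ : θ ∈ Icc (0:ℝ) 1) :
    ‖(1 - θ) • x + θ • y‖ ≤ ‖x‖ + ‖y‖ := by
  calc ‖(1 - θ) • x + θ • y‖ ≤ (1 - θ) * ‖x‖ + θ * ‖y‖ := by
        rw [← norm_smul_of_nonneg (by linarith [hθ.2]), ← norm_smul_of_nonneg hθ.1]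
        exact norm_add_le _ _
    _ ≤ ‖x‖ + ‖y‖ := by nlinarith [norm_nonneg x, norm_nonneg y, hθ.1, hθ.2]

lemma mul_abs_sub_div_le_norm_sub_smul_add_smul (hθ : θ ∈ Icc (0:ℝ) 1) :
    (‖x‖ + ‖y‖) * |θ - ‖x‖ / (‖x‖ + ‖y‖)| ≤ ‖(1 - θ) • x + θ • y‖ := by
  rcases (add_nonneg (norm_nonneg x) (norm_nonneg y)).eq_or_lt with h0 | hpos
  · rw [← h0, zero_mul]
    exact norm_nonneg _
  have h := abs_norm_sub_norm_le (θ • y) (-((1 - θ) • x))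
  rw [norm_neg, norm_smul_of_nonneg hθ.1, norm_smul_of_nonneg (by linarith [hθ.2]),
    sub_neg_eq_add, add_comm] at h
  calc (‖x‖ + ‖y‖) * |θ - ‖x‖ / (‖x‖ + ‖y‖)| = |θ * ‖y‖ - (1 - θ) * ‖x‖| := by
        rw [← abs_of_pos hpos, ← abs_mul, abs_of_pos hpos, mul_sub, mul_div_cancel₀ _ hpos.ne']
        ring_nf
    _ ≤ _ := h

end Segment

namespace IsNFunction

variable {φ φ' : ℝ → ℝ}

lemma map_zero (h : IsNFunction φ φ') : φ 0 = 0 := h.1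

lemma deriv_monotoneOn (h : IsNFunction φ φ') : MonotoneOn φ' (Ici 0) := h.2.2.1

lemma deriv_zero (h : IsNFunction φ φ') : φ' 0 = 0 := h.2.2.2.2.1

lemma tendsto_deriv_atTop (h : IsNFunction φ φ') : Tendsto φ' atTop atTop := h.2.2.2.2.2.2

lemma hasDerivAt (h : IsNFunction φ φ') {x : ℝ} (hx : 0 < x) : HasDerivAt φ (φ' x) x :=
  (h.2.1 x hx.le).hasDerivAt (Ici_mem_nhds hx)

lemma deriv_nonneg (h : IsNFunction φ φ') {t : ℝ} (ht : 0 ≤ t) : 0 ≤ φ' t :=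
  h.deriv_zero ▸ h.deriv_monotoneOn self_mem_Ici ht ht

lemma exists_sub_eq_deriv_mul (h : IsNFunction φ φ') {a b : ℝ} (ha : 0 ≤ a) (hab : a < b) :
    ∃ c ∈ Ioo a b, φ b - φ a = φ' c * (b - a) := by
  obtain ⟨c, hc, hslope⟩ := exists_hasDerivAt_eq_slope φ φ' hab
    (fun x hx => (h.2.1 x (ha.trans hx.1)).continuousWithinAt.mono fun y hy => ha.trans hy.1)
    fun x hx => h.hasDerivAt (ha.trans_lt hx.1)
  exact ⟨c, hc, by rw [hslope, div_mul_cancel₀ _ (sub_ne_zero.2 hab.ne')]⟩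

lemma deriv_mul_sub_le (h : IsNFunction φ φ') {a b : ℝ} (ha : 0 ≤ a) (hab : a ≤ b) :
    φ' a * (b - a) ≤ φ b - φ a := by
  rcases hab.eq_or_lt with rfl | hab
  · simp
  obtain ⟨c, hc, hsub⟩ := h.exists_sub_eq_deriv_mul ha hab
  rw [hsub]
  exact mul_le_mul_of_nonneg_right (h.deriv_monotoneOn ha (ha.trans hc.1.le) hc.1.le)
    (sub_nonneg.2 hab.le)

lemma sub_le_deriv_mul (h : IsNFunction φ φ') {a b : ℝ} (ha : 0 ≤ a) (hab : a ≤ b) :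
    φ b - φ a ≤ φ' b * (b - a) := by
  rcases hab.eq_or_lt with rfl | hab
  · simp
  obtain ⟨c, hc, hsub⟩ := h.exists_sub_eq_deriv_mul ha hab
  rw [hsub]
  exact mul_le_mul_of_nonneg_right
    (h.deriv_monotoneOn (ha.trans hc.1.le) (ha.trans hab.le) hc.2.le) (sub_nonneg.2 hab.le)

lemma nonneg (h : IsNFunction φ φ') {t : ℝ} (ht : 0 ≤ t) : 0 ≤ φ t := by
  have := h.deriv_mul_sub_le le_rfl ht
  rw [h.map_zero, h.deriv_zero] at this
  linarith

lemma le_mul_deriv (h : IsNFunction φ φ') {t : ℝ} (ht : 0 ≤ t) : φ t ≤ t * φ' t := by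
  simpa [h.map_zero, mul_comm] using h.sub_le_deriv_mul le_rfl ht

lemma mul_deriv_le_two_mul (h : IsNFunction φ φ') {t : ℝ} (ht : 0 ≤ t) :
    t * φ' t ≤ φ (2 * t) := by
  have := h.deriv_mul_sub_le ht (by linarith : t ≤ 2 * t)
  nlinarith [h.nonneg ht]

lemma bddAbove_conj (h : IsNFunction φ φ') {s : ℝ} (hs : 0 ≤ s) :
    BddAbove {y | ∃ u ≥ (0:ℝ), y = u * s - φ u} := by
  obtain ⟨T, hT⟩ := (h.tendsto_deriv_atTop.eventually_ge_atTop s).exists_forall_of_atTop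
  set T' := max T 0
  refine ⟨T' * s, ?_⟩
  rintro y ⟨u, hu, rfl⟩
  rcases le_total u T' with huT | huT
  · nlinarith [h.nonneg hu, mul_le_mul_of_nonneg_right huT hs]
  · nlinarith [h.deriv_mul_sub_le (le_max_right T 0) huT, hT T' (le_max_left T 0),
      h.nonneg (le_max_right T 0)]

lemma le_conjFn (h : IsNFunction φ φ') {s u : ℝ} (hs : 0 ≤ s) (hu : 0 ≤ u) :
    u * s - φ u ≤ conjFn φ s :=
  le_csSup (h.bddAbove_conj hs) ⟨u, hu, rfl⟩

lemma conjFn_deriv_le (h : IsNFunction φ φ') {t : ℝ} (ht : 0 ≤ t) :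
    conjFn φ (φ' t) ≤ t * φ' t - φ t := by
  refine csSup_le ⟨_, 0, le_rfl, rfl⟩ ?_
  rintro y ⟨u, hu, rfl⟩
  rcases le_total t u with htu | hut
  · nlinarith [h.deriv_mul_sub_le ht htu]
  · nlinarith [h.sub_le_deriv_mul hu hut]

lemma growth_of_conjFn_doubling (h : IsNFunction φ φ') {Ks : ℝ} (hKs : 0 ≤ Ks)
    (hΔs : ∀ t ≥ (0:ℝ), conjFn φ (2 * t) ≤ Ks * conjFn φ t) {t : ℝ} (ht : 0 ≤ t) :
    3 / 2 * φ' t ≤ φ' ((2 * Ks + 2) * t) := by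
  set L := 2 * Ks + 2
  have hLt : 0 ≤ L * t := by positivity
  -- Young's equality `φ*(φ'(t)) = t φ'(t) - φ(t)` against the value of `φ*(2 φ'(t))` at `L t`.
  have hconj : L * t * (2 * φ' t) - φ (L * t) ≤ Ks * (t * φ' t - φ t) :=
    calc L * t * (2 * φ' t) - φ (L * t) ≤ conjFn φ (2 * φ' t) :=
          h.le_conjFn (by linarith [h.deriv_nonneg ht]) hLt
      _ ≤ Ks * conjFn φ (φ' t) := hΔs _ (h.deriv_nonneg ht)
      _ ≤ Ks * (t * φ' t - φ t) := mul_le_mul_of_nonneg_left (h.conjFn_deriv_le ht) hKs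
  have hkey : t * (L * (3 / 2 * φ' t)) ≤ t * (L * φ' (L * t)) := by
    nlinarith [h.le_mul_deriv hLt, h.nonneg ht, h.deriv_nonneg ht, mul_nonneg hKs (h.nonneg ht)]
  rcases ht.eq_or_lt with rfl | ht
  · simp [h.deriv_zero]
  exact le_of_mul_le_mul_left (le_of_mul_le_mul_left hkey ht) (by positivity)

lemma deriv_div_le_of_growth (h : IsNFunction φ φ') {q L : ℝ} (hq : 1 < q) (hqL : q ≤ L)
    (hgrowth : ∀ t ≥ (0:ℝ), q * φ' t ≤ φ' (L * t)) {u a d : ℝ} (ha : 0 < a) (hd : 0 < d)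
    (hdu : a * d ≤ u) (hua : u ≤ a) :
    φ' u / u ≤ q * (φ' a / a) * d ^ (Real.log q / Real.log L - 1) := by
  set δ := Real.log q / Real.log L
  have hu : 0 < u := (mul_pos ha hd).trans_le hdu
  have hδ : δ - 1 ≤ 0 := by
    rw [sub_nonpos, div_le_one (Real.log_pos (hq.trans_le hqL))]
    exact Real.log_le_log (by linarith) hqL
  have hdecay := h.deriv_monotoneOn.le_mul_rpow_of_growth hq (hq.trans_le hqL) hgrowth hu hua
    (h.deriv_nonneg hu.le)
  calc φ' u / u ≤ q * (u / a) ^ δ * φ' a / u := by gcongr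
    _ = q * (φ' a / a) * (u / a) ^ (δ - 1) := by
        rw [Real.rpow_sub_one (by positivity)]
        field_simp
    _ ≤ q * (φ' a / a) * d ^ (δ - 1) := by
        have := h.deriv_nonneg ha.le
        refine mul_le_mul_of_nonneg_left (Real.rpow_le_rpow_of_nonpos hd ?_ hδ) (by positivity)
        rw [le_div_iff₀ ha]
        linarith

lemma two_pow_mul_deriv_le (h : IsNFunction φ φ') {K : ℝ} (hK : 0 ≤ K)
    (hΔ : ∀ t ≥ (0:ℝ), φ (2 * t) ≤ K * φ t) (k : ℕ) {s : ℝ} (hs : 0 < s) :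
    2 ^ k * φ' (2 ^ k * s) ≤ K ^ (k + 1) * φ' s := by
  refine le_of_mul_le_mul_left ?_ hs
  calc s * (2 ^ k * φ' (2 ^ k * s)) = 2 ^ k * s * φ' (2 ^ k * s) := by ring
    _ ≤ φ (2 * (2 ^ k * s)) := h.mul_deriv_le_two_mul (by positivity)
    _ = φ (2 ^ (k + 1) * s) := by ring_nf
    _ ≤ K ^ (k + 1) * φ s := le_pow_mul_of_doubling hK hΔ (k + 1) hs.le
    _ ≤ K ^ (k + 1) * (s * φ' s) := by gcongr; exact h.le_mul_deriv hs.le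
    _ = s * (K ^ (k + 1) * φ' s) := by ring

lemma four_mul_deriv_div_le (h : IsNFunction φ φ') {K : ℝ} (hK : 0 ≤ K)
    (hΔ : ∀ t ≥ (0:ℝ), φ (2 * t) ≤ K * φ t) {u a : ℝ} (ha : 0 < a) (hau : a / 4 ≤ u)
    (hua : u ≤ a) :
    4 * (φ' a / a) ≤ K ^ 3 * (φ' u / u) := by
  have hu : 0 < u := by linarith
  have hquarter := h.two_pow_mul_deriv_le hK hΔ 2 (by positivity : 0 < a / 4)
  rw [show (2:ℝ) ^ 2 * (a / 4) = a by ring] at hquarter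
  calc 4 * (φ' a / a) ≤ K ^ 3 * φ' (a / 4) / a := by
        rw [← mul_div_assoc]
        exact div_le_div_of_nonneg_right (by linarith) ha.le
    _ ≤ K ^ 3 * (φ' u / u) := by
        rw [mul_div_assoc]
        gcongr
        · exact h.deriv_nonneg hu.le
        · exact h.deriv_monotoneOn (by positivity : (0:ℝ) ≤ a / 4) hu.le hau

end IsNFunction

/-- If `φ` and `φ*` satisfy the `Δ₂`-condition, then uniformly in
`P₀, P₁ ∈ ℝ^{N×n}` with `|P₀| + |P₁| > 0`,
`∫₀¹ φ'(|P_θ|)/|P_θ| dθ ∼ φ'(|P₀| + |P₁|)/(|P₀| + |P₁|)`,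
where `P_θ = (1−θ)P₀ + θP₁`; constants depend only on the `Δ₂`-constants. -/
theorem segment_integral_equiv (K Ks : ℝ) (hK : 0 < K) (hKs : 0 < Ks) :
    ∃ c C : ℝ, 0 < c ∧ 0 < C ∧
      ∀ (N n : ℕ) (φ φ' : ℝ → ℝ), IsNFunction φ φ' →
        (∀ t ≥ (0:ℝ), φ (2 * t) ≤ K * φ t) →
        (∀ t ≥ (0:ℝ), conjFn φ (2 * t) ≤ Ks * conjFn φ t) →
        ∀ P₀ P₁ : EuclideanSpace ℝ (Fin N × Fin n), 0 < ‖P₀‖ + ‖P₁‖ →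
          c * (φ' (‖P₀‖ + ‖P₁‖) / (‖P₀‖ + ‖P₁‖)) ≤
            (∫ θ in (0:ℝ)..1, φ' ‖(1 - θ) • P₀ + θ • P₁‖ / ‖(1 - θ) • P₀ + θ • P₁‖) ∧
          (∫ θ in (0:ℝ)..1, φ' ‖(1 - θ) • P₀ + θ • P₁‖ / ‖(1 - θ) • P₀ + θ • P₁‖) ≤
            C * (φ' (‖P₀‖ + ‖P₁‖) / (‖P₀‖ + ‖P₁‖)) := by
  set L := 2 * Ks + 2
  set δ := Real.log (3 / 2) / Real.log L
  have hL : 3 / 2 ≤ L := by linarith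
  have hδ : 0 < δ := div_pos (Real.log_pos (by norm_num)) (Real.log_pos (by linarith))
  refine ⟨(K ^ 3)⁻¹, 3 / δ, by positivity, by positivity,
    fun N n φ φ' h hΔ hΔs P₀ P₁ hM => ?_⟩
  set M := ‖P₀‖ + ‖P₁‖
  set θ₀ := ‖P₀‖ / M
  set f := fun θ : ℝ => φ' ‖(1 - θ) • P₀ + θ • P₁‖ / ‖(1 - θ) • P₀ + θ • P₁‖
  have hθ₀ : θ₀ ∈ Icc (0:ℝ) 1 :=
    ⟨by positivity, div_le_one_of_le₀ (le_add_of_nonneg_right (norm_nonneg _)) hM.le⟩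
  have hf0 : ∀ θ, 0 ≤ f θ := fun θ => div_nonneg (h.deriv_nonneg (norm_nonneg _)) (norm_nonneg _)
  have hfm : Measurable f :=
    (h.deriv_monotoneOn.measurable_comp_of_nonneg (by fun_prop) fun _ => norm_nonneg _).div
      (by fun_prop)
  have hupper : ∀ θ ∈ Icc (0:ℝ) 1, θ ≠ θ₀ → f θ ≤ 3 / 2 * (φ' M / M) * |θ - θ₀| ^ (δ - 1) :=
    fun θ hθ hne => h.deriv_div_le_of_growth (by norm_num) hL
      (fun t ht => h.growth_of_conjFn_doubling hKs.le hΔs ht) hM (abs_pos.2 (sub_ne_zero.2 hne))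
      (mul_abs_sub_div_le_norm_sub_smul_add_smul hθ) (norm_sub_smul_add_smul_le hθ)
  have hlower : ∀ θ ∈ Icc (0:ℝ) 1, 1 / 4 ≤ |θ - θ₀| → 4 * (φ' M / M) / K ^ 3 ≤ f θ :=
    fun θ hθ hfar => by
      have hdist := mul_abs_sub_div_le_norm_sub_smul_add_smul (x := P₀) (y := P₁) hθ
      exact (div_le_iff₀' (by positivity)).2 <| h.four_mul_deriv_div_le hK.le hΔ hM
        (by nlinarith) (norm_sub_smul_add_smul_le hθ)
  obtain ⟨hint, hle⟩ := integral_le_of_le_mul_abs_sub_rpow (by linarith : (-1:ℝ) < δ - 1) hθ₀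
    (by have := h.deriv_nonneg hM.le; positivity) hfm.aestronglyMeasurable (fun θ _ => hf0 θ)
    hupper
  constructor
  · calc (K ^ 3)⁻¹ * (φ' M / M) = 4 * (φ' M / M) / K ^ 3 / 4 := by ring
      _ ≤ _ := div_four_le_integral_of_le_away hint (fun θ _ => hf0 θ) hlower
  · calc _ ≤ 2 * (3 / 2 * (φ' M / M)) / (δ - 1 + 1) := hle
      _ = 3 / δ * (φ' M / M) := by ring_nf
end

section
/- Let φ be an N-function of class C¹ on [0,∞) and C² on (0,∞) with φ'(t) ∼ t φ''(t) uniformly in t > 0, and let φ_a denote its shifted N-function. Then there is a constant c, depending only on the characteristics of φ, such that φ_a(st) ≤ c s² φ_a(t) for all s ∈ [0,1], all a ≥ 0, and all t ∈ [0, a]. -/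
open Set Filter MeasureTheory

noncomputable def shiftFn (φ' : ℝ → ℝ) (a t : ℝ) : ℝ :=
  ∫ s in (0:ℝ)..t, φ' (a + s) * s / (a + s)

/-!
For `0 ≤ σ ≤ a` the shifted integrand `φ'(a+σ) σ/(a+σ)` lies between `σ φ'(a)/(2a)` and
`σ φ'(2a)/a`, so on `[0, a]` the shifted function `φ_a(t)` is squeezed between multiples of
`φ'(a) t²/a` and `φ'(2a) t²/a`. The upper characteristic bound `t φ'' ≤ c₂ φ'` makes
`t ↦ φ'(t) t^(-c₂)` antitone, whence `φ'(2a) ≤ 2^c₂ φ'(a)`, and the two quadratic bounds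
combine to `φ_a(st) ≤ 2 · 2^c₂ s² φ_a(t)`.
-/

open Real

section Growth

variable {g g' : ℝ → ℝ} {c : ℝ}

lemma antitoneOn_mul_rpow_neg_of_mul_deriv_le (hg : ∀ t > 0, HasDerivAt g (g' t) t)
    (hgrowth : ∀ t > 0, t * g' t ≤ c * g t) :
    AntitoneOn (fun t => g t * t ^ (-c)) (Ioi 0) := by
  have hderiv : ∀ t > 0, HasDerivAt (fun t => g t * t ^ (-c))
      (g' t * t ^ (-c) + g t * (-c * t ^ (-c - 1))) t := fun t ht =>
    (hg t ht).mul (hasDerivAt_rpow_const (Or.inl ht.ne'))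
  refine antitoneOn_of_hasDerivWithinAt_nonpos (convex_Ioi 0)
    (f' := fun t => g' t * t ^ (-c) + g t * (-c * t ^ (-c - 1)))
    (fun t ht => (hderiv t ht).continuousAt.continuousWithinAt) ?_ ?_
  · rw [interior_Ioi]
    exact fun t ht => (hderiv t ht).hasDerivWithinAt
  · rw [interior_Ioi]
    intro t (ht : 0 < t)
    calc g' t * t ^ (-c) + g t * (-c * t ^ (-c - 1))
        = t ^ (-c - 1) * (t * g' t - c * g t) := by
          rw [show t ^ (-c) = t ^ (-c - 1) * t by rw [← rpow_add_one ht.ne']; ring_nf]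
          ring
      _ ≤ 0 := mul_nonpos_of_nonneg_of_nonpos (rpow_pos_of_pos ht _).le
          (by linarith [hgrowth t ht])

lemma le_div_rpow_mul_of_mul_deriv_le (hg : ∀ t > 0, HasDerivAt g (g' t) t)
    (hgrowth : ∀ t > 0, t * g' t ≤ c * g t) {a b : ℝ} (ha : 0 < a) (hab : a ≤ b) :
    g b ≤ (b / a) ^ c * g a := by
  have hb : 0 < b := ha.trans_le hab
  have hanti : g b * (b ^ c)⁻¹ ≤ g a * (a ^ c)⁻¹ := by
    simpa only [rpow_neg ha.le, rpow_neg hb.le] using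
      antitoneOn_mul_rpow_neg_of_mul_deriv_le hg hgrowth ha hb hab
  have hbc : 0 < b ^ c := rpow_pos_of_pos hb c
  calc g b = b ^ c * (g b * (b ^ c)⁻¹) := by field_simp
    _ ≤ b ^ c * (g a * (a ^ c)⁻¹) := by gcongr
    _ = (b / a) ^ c * g a := by rw [div_rpow hb.le ha.le]; ring

end Growth

section Shift

variable {φ' : ℝ → ℝ} {a : ℝ}

lemma monotoneOn_shift_integrand (hmono : MonotoneOn φ' (Ici 0))
    (hnonneg : ∀ t > 0, 0 ≤ φ' t) (ha : 0 < a) :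
    MonotoneOn (fun σ => φ' (a + σ) * σ / (a + σ)) (Ici 0) := by
  simp only [mul_div_assoc]
  refine MonotoneOn.mul (f := fun σ => φ' (a + σ)) (g := fun σ => σ / (a + σ)) ?_ ?_
    (fun σ (hσ : 0 ≤ σ) => hnonneg _ (by linarith))
    (fun σ (hσ : 0 ≤ σ) => div_nonneg hσ (by linarith))
  · intro x (hx : 0 ≤ x) y (hy : 0 ≤ y) hxy
    exact hmono (show 0 ≤ a + x by linarith) (show 0 ≤ a + y by linarith) (by linarith)
  · intro x (hx : 0 ≤ x) y (hy : 0 ≤ y) hxy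
    rw [div_le_div_iff₀ (by linarith) (by linarith)]
    nlinarith

lemma intervalIntegrable_shift_integrand (hmono : MonotoneOn φ' (Ici 0))
    (hnonneg : ∀ t > 0, 0 ≤ φ' t) (ha : 0 < a) {t : ℝ} (ht : 0 ≤ t) :
    IntervalIntegrable (fun σ => φ' (a + σ) * σ / (a + σ)) volume 0 t :=
  ((monotoneOn_shift_integrand hmono hnonneg ha).mono
    (by rw [uIcc_of_le ht]; exact Icc_subset_Ici_self)).intervalIntegrable

lemma integral_const_mul_id (k t : ℝ) : ∫ σ in (0:ℝ)..t, k * σ = k / 2 * t ^ 2 := by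
  rw [intervalIntegral.integral_const_mul, integral_id]
  ring

lemma mul_sq_le_shiftFn (hmono : MonotoneOn φ' (Ici 0)) (hnonneg : ∀ t > 0, 0 ≤ φ' t)
    (ha : 0 < a) {t : ℝ} (ht : 0 ≤ t) (hta : t ≤ a) :
    φ' a / (4 * a) * t ^ 2 ≤ shiftFn φ' a t := by
  have hpointwise : ∀ σ ∈ Icc 0 t, φ' a / (2 * a) * σ ≤ φ' (a + σ) * σ / (a + σ) := by
    rintro σ ⟨hσ, hσt⟩
    have hφ : φ' a ≤ φ' (a + σ) :=
      hmono (show 0 ≤ a by linarith) (show 0 ≤ a + σ by linarith) (by linarith)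
    rw [div_mul_eq_mul_div]
    exact div_le_div₀ (mul_nonneg ((hnonneg a ha).trans hφ) hσ)
      (mul_le_mul_of_nonneg_right hφ hσ) (by linarith) (by linarith)
  calc φ' a / (4 * a) * t ^ 2 = ∫ σ in (0:ℝ)..t, φ' a / (2 * a) * σ := by
        rw [integral_const_mul_id]; ring
    _ ≤ shiftFn φ' a t := intervalIntegral.integral_mono_on ht
        ((continuous_const_mul _).intervalIntegrable _ _)
        (intervalIntegrable_shift_integrand hmono hnonneg ha ht) hpointwise

lemma shiftFn_le_mul_sq (hmono : MonotoneOn φ' (Ici 0)) (hnonneg : ∀ t > 0, 0 ≤ φ' t)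
    (ha : 0 < a) {t : ℝ} (ht : 0 ≤ t) (hta : t ≤ a) :
    shiftFn φ' a t ≤ φ' (2 * a) / (2 * a) * t ^ 2 := by
  have hpointwise : ∀ σ ∈ Icc 0 t, φ' (a + σ) * σ / (a + σ) ≤ φ' (2 * a) / a * σ := by
    rintro σ ⟨hσ, hσt⟩
    have hφ : φ' (a + σ) ≤ φ' (2 * a) :=
      hmono (show 0 ≤ a + σ by linarith) (show 0 ≤ 2 * a by linarith) (by linarith)
    rw [div_mul_eq_mul_div]
    exact div_le_div₀ (mul_nonneg (hnonneg _ (by linarith)) hσ)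
      (mul_le_mul_of_nonneg_right hφ hσ) ha (by linarith)
  calc shiftFn φ' a t ≤ ∫ σ in (0:ℝ)..t, φ' (2 * a) / a * σ :=
        intervalIntegral.integral_mono_on ht
          (intervalIntegrable_shift_integrand hmono hnonneg ha ht)
          ((continuous_const_mul _).intervalIntegrable _ _) hpointwise
    _ = φ' (2 * a) / (2 * a) * t ^ 2 := by
        rw [integral_const_mul_id]; field_simp

end Shift

theorem shifted_almost_quadratic_general (c₁ c₂ : ℝ) :
    ∃ c : ℝ, 0 < c ∧
      ∀ φ φ' φ'' : ℝ → ℝ, IsNFunction φ φ' →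
        (∀ t > (0:ℝ), HasDerivAt φ' (φ'' t) t) →
        (∀ t > (0:ℝ), ContinuousAt φ'' t) →
        (∀ t > (0:ℝ), c₁ * φ' t ≤ t * φ'' t ∧ t * φ'' t ≤ c₂ * φ' t) →
        ∀ s, 0 ≤ s → s ≤ 1 → ∀ a ≥ (0:ℝ), ∀ t, 0 ≤ t → t ≤ a →
          shiftFn φ' a (s * t) ≤ c * s ^ 2 * shiftFn φ' a t := by
  refine ⟨2 * 2 ^ c₂, by positivity, ?_⟩
  intro φ φ' φ'' hN hd _ hchar s hs0 hs1 a _ t ht0 hta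
  obtain ⟨-, -, hmono, -, -, hpos, -⟩ := hN
  have hnonneg : ∀ t > 0, 0 ≤ φ' t := fun t ht => (hpos t ht).le
  rcases ht0.eq_or_lt with rfl | ht
  · simp [shiftFn]
  have ha : 0 < a := ht.trans_le hta
  have hdoubling : φ' (2 * a) ≤ 2 ^ c₂ * φ' a := by
    simpa [ha.ne'] using le_div_rpow_mul_of_mul_deriv_le hd (fun t ht => (hchar t ht).2) ha
      (by linarith : a ≤ 2 * a)
  have hst : s * t ≤ a := (mul_le_of_le_one_left ht0 hs1).trans hta
  calc shiftFn φ' a (s * t) ≤ φ' (2 * a) / (2 * a) * (s * t) ^ 2 :=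
        shiftFn_le_mul_sq hmono hnonneg ha (by positivity) hst
    _ ≤ 2 ^ c₂ * φ' a / (2 * a) * (s * t) ^ 2 := by gcongr
    _ = 2 * 2 ^ c₂ * s ^ 2 * (φ' a / (4 * a) * t ^ 2) := by field_simp; ring
    _ ≤ 2 * 2 ^ c₂ * s ^ 2 * shiftFn φ' a t := by
        gcongr
        exact mul_sq_le_shiftFn hmono hnonneg ha ht0 hta

/-- For `φ` an N-function, `C¹` on `[0,∞)`, `C²` on `(0,∞)`, with `φ'(t) ∼ t φ''(t)`:
there is `c`, depending only on the characteristics of `φ`, with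
`φ_a(s t) ≤ c s² φ_a(t)` for all `s ∈ [0,1]`, `a ≥ 0`, `t ∈ [0,a]`. -/
theorem shifted_almost_quadratic (c₁ c₂ : ℝ) (hc₁ : 0 < c₁) (hc₂ : 0 < c₂) :
    ∃ c : ℝ, 0 < c ∧
      ∀ φ φ' φ'' : ℝ → ℝ, IsNFunction φ φ' →
        (∀ t > (0:ℝ), HasDerivAt φ' (φ'' t) t) →
        (∀ t > (0:ℝ), ContinuousAt φ'' t) →
        (∀ t > (0:ℝ), c₁ * φ' t ≤ t * φ'' t ∧ t * φ'' t ≤ c₂ * φ' t) →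
        ∀ s, 0 ≤ s → s ≤ 1 → ∀ a ≥ (0:ℝ), ∀ t, 0 ≤ t → t ≤ a →
          shiftFn φ' a (s * t) ≤ c * s ^ 2 * shiftFn φ' a t :=
  shifted_almost_quadratic_general c₁ c₂
end

section
/- Let φ be an N-function, C¹ on [0,∞) and C² on (0,∞), with φ'(t) ∼ t φ''(t) for t > 0, and suppose f ∈ C¹(ℝ^{N×n}) ∩ C²(ℝ^{N×n}\{0}) satisfies |D²f(Q)| ≤ c₁ φ''(|Q|) for all Q ≠ 0. Then |Df(Q) − Df(P)| ≤ c φ'_{|Q|}(|P − Q|) for all P, Q ∈ ℝ^{N×n}, where φ'_a(t) := φ'(a+t)·t/(a+t) and c depends only on c₁ and the characteristics of φ. -/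
open Set Filter

/-- The derivative `φ'_a(t) = φ'(a+t)·t/(a+t)` of the shifted N-function. -/
noncomputable def shiftDeriv (φ' : ℝ → ℝ) (a t : ℝ) : ℝ :=
  φ' (a + t) * t / (a + t)

/-!
Write `a = ‖Q‖`, `r = ‖P - Q‖` and `ψ = cf • φ'`, so that `‖D²f x‖ ≤ ψ'(‖x‖)`.

If `2r ≤ a`, the segment `[Q, P]` stays in the annulus `a - r ≤ ‖z‖ ≤ a + r`, where
`ψ'(‖z‖) ≤ c₂ ψ(‖z‖)/‖z‖ ≤ c₂ ψ(a + r)/(a - r)`; the mean value inequality and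
`a + r ≤ 3(a - r)` give `‖Df Q - Df P‖ ≤ 3 c₂ ψ_a(r)`.

If `2r > a`, compare both `Df Q` and `Df P` with `Df 0`. On `[ε, 1]` the increment of
`t ↦ Df (t • X)` is dominated by that of `t ↦ ψ(t‖X‖)`, so letting `ε → 0` gives
`‖Df X - Df 0‖ ≤ ψ(‖X‖) ≤ ψ(a + r)`, and `ψ(a + r) ≤ 3 ψ_a(r)` since `a + r < 3r`.
-/

open Topology

section Increments

variable {E F : Type*} [NormedAddCommGroup E] [NormedSpace ℝ E]
  [NormedAddCommGroup F] [NormedSpace ℝ F] {g : E → F} {g' : E → E →L[ℝ] F} {ψ ψ' : ℝ → ℝ}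

theorem norm_sub_le_sub_of_norm_deriv_le {f f' : ℝ → F} {B B' : ℝ → ℝ} {a b : ℝ}
    (hab : a ≤ b) (hf : ∀ t ∈ Icc a b, HasDerivAt f (f' t) t)
    (hB : ∀ t ∈ Icc a b, HasDerivAt B (B' t) t) (bound : ∀ t ∈ Icc a b, ‖f' t‖ ≤ B' t) :
    ‖f b - f a‖ ≤ B b - B a := by
  refine image_norm_le_of_norm_deriv_right_le_deriv_boundary' (f := fun t => f t - f a)
    (B := fun t => B t - B a) (fun t ht => ((hf t ht).sub_const _).continuousAt.continuousWithinAt)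
    (fun t ht => ((hf t (Ico_subset_Icc_self ht)).sub_const _).hasDerivWithinAt) (by simp)
    (fun t ht => ((hB t ht).sub_const _).continuousAt.continuousWithinAt)
    (fun t ht => ((hB t (Ico_subset_Icc_self ht)).sub_const _).hasDerivWithinAt)
    (fun t ht => bound t (Ico_subset_Icc_self ht)) (right_mem_Icc.2 hab)

theorem norm_sub_apply_zero_le_of_norm_fderiv_le (hg : ∀ x ≠ 0, HasFDerivAt g (g' x) x)
    (hg₀ : ContinuousAt g 0) (hψ : ∀ t > 0, HasDerivAt ψ (ψ' t) t)
    (hψ_nonneg : ∀ t ≥ 0, 0 ≤ ψ t) (hbound : ∀ x ≠ 0, ‖g' x‖ ≤ ψ' ‖x‖) (X : E) :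
    ‖g X - g 0‖ ≤ ψ ‖X‖ := by
  rcases eq_or_ne X 0 with rfl | hX
  · simpa using hψ_nonneg 0 le_rfl
  have hX₀ : 0 < ‖X‖ := norm_pos_iff.2 hX
  have hray : ∀ ε ∈ Ioc (0 : ℝ) 1, ‖g X - g (ε • X)‖ ≤ ψ ‖X‖ := by
    rintro ε ⟨hε₀, hε₁⟩
    have hpos : ∀ t ∈ Icc ε 1, 0 < t := fun t ht => hε₀.trans_le ht.1
    have key := norm_sub_le_sub_of_norm_deriv_le (f := fun t => g (t • X))
      (f' := fun t => g' (t • X) X) (B := fun t => ψ (t * ‖X‖))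
      (B' := fun t => ψ' (t * ‖X‖) * ‖X‖)
      hε₁ (fun t ht => by
        simpa [Function.comp_def] using (hg _ (smul_ne_zero (hpos t ht).ne' hX)).comp_hasDerivAt t
          ((hasDerivAt_id t).smul_const X))
      (fun t ht => by
        simpa [Function.comp_def] using
          (hψ _ (mul_pos (hpos t ht) hX₀)).comp t ((hasDerivAt_id t).mul_const ‖X‖))
      (fun t ht => by
        calc ‖g' (t • X) X‖ ≤ ‖g' (t • X)‖ * ‖X‖ := (g' _).le_opNorm X
          _ ≤ ψ' (t * ‖X‖) * ‖X‖ := by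
            gcongr
            simpa [norm_smul, abs_of_pos (hpos t ht)] using
              hbound _ (smul_ne_zero (hpos t ht).ne' hX))
    simp only [one_smul, one_mul] at key
    linarith [hψ_nonneg (ε * ‖X‖) (by positivity)]
  have hlim : Tendsto (fun ε : ℝ => g X - g (ε • X)) (𝓝[>] 0) (𝓝 (g X - g 0)) := by
    refine tendsto_const_nhds.sub (hg₀.tendsto.comp ?_)
    simpa using ((tendsto_id (x := 𝓝 (0 : ℝ))).smul_const X).mono_left nhdsWithin_le_nhds
  exact le_of_tendsto hlim.norm (eventually_of_mem (Ioc_mem_nhdsGT one_pos) hray)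

theorem norm_sub_le_shiftDeriv_of_two_mul_le {C : ℝ} (hC : 0 ≤ C)
    (hg : ∀ x ≠ 0, HasFDerivAt g (g' x) x) (hbound : ∀ x ≠ 0, ‖g' x‖ ≤ ψ' ‖x‖)
    (hψ_mono : MonotoneOn ψ (Ici 0)) (hψ_nonneg : ∀ t ≥ 0, 0 ≤ ψ t)
    (hψ' : ∀ t > 0, t * ψ' t ≤ C * ψ t) {P Q : E} (h : 2 * ‖P - Q‖ ≤ ‖Q‖) :
    ‖g Q - g P‖ ≤ 3 * C * shiftDeriv ψ ‖Q‖ ‖P - Q‖ := by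
  rcases (norm_nonneg (P - Q)).eq_or_lt with hr | hr
  · obtain rfl : P = Q := sub_eq_zero.1 (norm_eq_zero.1 hr.symm)
    simp [shiftDeriv]
  set a := ‖Q‖
  set r := ‖P - Q‖
  have hannulus : ∀ z ∈ segment ℝ Q P, a - r ≤ ‖z‖ ∧ ‖z‖ ≤ a + r := by
    intro z hz
    have hzQ : ‖z - Q‖ ≤ r := by
      simpa [dist_eq_norm, norm_sub_rev Q P] using segment_subset_closedBall_left Q P hz
    constructor
    · linarith [norm_le_norm_add_norm_sub' Q z, norm_sub_rev Q z]
    · linarith [norm_le_norm_add_norm_sub' z Q]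
  have hbound' : ∀ z ∈ segment ℝ Q P, ‖g' z‖ ≤ C * ψ (a + r) / (a - r) := by
    intro z hz
    obtain ⟨hz₁, hz₂⟩ := hannulus z hz
    have hz₀ : 0 < ‖z‖ := by linarith
    calc ‖g' z‖ ≤ ψ' ‖z‖ := hbound z (norm_pos_iff.1 hz₀)
      _ ≤ C * ψ ‖z‖ / ‖z‖ := by rw [le_div_iff₀ hz₀, mul_comm]; exact hψ' _ hz₀
      _ ≤ C * ψ (a + r) / (a - r) := by
        gcongr
        · exact mul_nonneg hC (hψ_nonneg _ (by linarith))
        · linarith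
        · exact hψ_mono (mem_Ici.2 hz₀.le) (mem_Ici.2 (by linarith)) hz₂
  calc ‖g Q - g P‖ = ‖g P - g Q‖ := norm_sub_rev _ _
    _ ≤ C * ψ (a + r) / (a - r) * r :=
      (convex_segment Q P).norm_image_sub_le_of_norm_hasFDerivWithin_le
        (fun z hz => (hg z (norm_pos_iff.1 (by linarith [hannulus z hz]))).hasFDerivWithinAt)
        hbound' (left_mem_segment ℝ Q P) (right_mem_segment ℝ Q P)
    _ = C * ψ (a + r) * r / (a - r) := by ring
    _ ≤ 3 * (C * ψ (a + r) * r) / (a + r) := by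
      rw [div_le_div_iff₀ (by linarith) (by linarith)]
      nlinarith [mul_nonneg (mul_nonneg hC (hψ_nonneg (a + r) (by linarith))) hr.le]
    _ = 3 * C * shiftDeriv ψ a r := by unfold shiftDeriv; ring

theorem norm_sub_le_shiftDeriv_of_lt_two_mul (hg : ∀ x ≠ 0, HasFDerivAt g (g' x) x)
    (hg₀ : ContinuousAt g 0) (hψ : ∀ t > 0, HasDerivAt ψ (ψ' t) t)
    (hψ_mono : MonotoneOn ψ (Ici 0)) (hψ_nonneg : ∀ t ≥ 0, 0 ≤ ψ t)
    (hbound : ∀ x ≠ 0, ‖g' x‖ ≤ ψ' ‖x‖) {P Q : E} (h : ‖Q‖ < 2 * ‖P - Q‖) :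
    ‖g Q - g P‖ ≤ 6 * shiftDeriv ψ ‖Q‖ ‖P - Q‖ := by
  set a := ‖Q‖
  set r := ‖P - Q‖
  have ha : 0 ≤ a := norm_nonneg Q
  have hψ_le : ∀ X : E, ‖X‖ ≤ a + r → ‖g X - g 0‖ ≤ ψ (a + r) := fun X hX =>
    (norm_sub_apply_zero_le_of_norm_fderiv_le hg hg₀ hψ hψ_nonneg hbound X).trans
      (hψ_mono (mem_Ici.2 (norm_nonneg X)) (mem_Ici.2 (by linarith)) hX)
  calc ‖g Q - g P‖ ≤ ‖g Q - g 0‖ + ‖g P - g 0‖ := by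
        simpa only [norm_sub_rev (g 0)] using norm_sub_le_norm_sub_add_norm_sub (g Q) (g 0) (g P)
    _ ≤ ψ (a + r) + ψ (a + r) :=
      add_le_add (hψ_le Q (by linarith [norm_nonneg (P - Q)]))
        (hψ_le P (norm_le_norm_add_norm_sub' P Q))
    _ ≤ 6 * (ψ (a + r) * r / (a + r)) := by
      rw [mul_div_assoc', le_div_iff₀ (by linarith)]
      nlinarith [hψ_nonneg (a + r) (by linarith)]
    _ = 6 * shiftDeriv ψ a r := rfl

end Increments

theorem IsNFunction.deriv_nonneg_s14 {φ φ' : ℝ → ℝ} (hφ : IsNFunction φ φ') {t : ℝ} (ht : 0 ≤ t) :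
    0 ≤ φ' t := by
  obtain ⟨-, -, hmono, -, hzero, -, -⟩ := hφ
  simpa [hzero] using hmono (mem_Ici.2 le_rfl) (mem_Ici.2 ht) ht

theorem shiftDeriv_const_mul (c : ℝ) (φ' : ℝ → ℝ) (a t : ℝ) :
    shiftDeriv (fun s => c * φ' s) a t = c * shiftDeriv φ' a t := by
  simp only [shiftDeriv, mul_assoc, mul_div_assoc]

theorem Df_difference_estimate_general (c₁ c₂ cf : ℝ) (hc₂ : 0 < c₂) (hcf : 0 < cf) :
    ∃ c : ℝ, 0 < c ∧
      ∀ (N n : ℕ) (φ φ' φ'' : ℝ → ℝ), IsNFunction φ φ' →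
        (∀ t > (0:ℝ), HasDerivAt φ' (φ'' t) t) →
        (∀ t > (0:ℝ), ContinuousAt φ'' t) →
        (∀ t > (0:ℝ), c₁ * φ' t ≤ t * φ'' t ∧ t * φ'' t ≤ c₂ * φ' t) →
        ∀ f : EuclideanSpace ℝ (Fin N × Fin n) → ℝ,
          ContDiff ℝ 1 f →
          ContDiffOn ℝ 2 f {(0 : EuclideanSpace ℝ (Fin N × Fin n))}ᶜ →
          (∀ Q : EuclideanSpace ℝ (Fin N × Fin n), Q ≠ 0 →
            ‖fderiv ℝ (fderiv ℝ f) Q‖ ≤ cf * φ'' ‖Q‖) →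
          ∀ P Q : EuclideanSpace ℝ (Fin N × Fin n),
            ‖fderiv ℝ f Q - fderiv ℝ f P‖ ≤ c * shiftDeriv φ' ‖Q‖ ‖P - Q‖ := by
  refine ⟨3 * cf * c₂ + 6 * cf, by positivity, ?_⟩
  intro N n φ φ' φ'' hφ hφ' _ hcomp f hf₁ hf₂ hD2 P Q
  have hg : ∀ x ≠ 0, HasFDerivAt (fderiv ℝ f) (fderiv ℝ (fderiv ℝ f) x) x := fun x hx =>
    (((hf₂.contDiffAt (isOpen_compl_singleton.mem_nhds hx)).fderiv_right le_rfl).differentiableAt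
      one_ne_zero).hasFDerivAt
  have hψ_mono : MonotoneOn (fun t => cf * φ' t) (Ici 0) := fun s hs t ht hst =>
    mul_le_mul_of_nonneg_left (hφ.2.2.1 hs ht hst) hcf.le
  have hψ_nonneg : ∀ t ≥ 0, 0 ≤ cf * φ' t := fun t ht => mul_nonneg hcf.le (hφ.deriv_nonneg_s14 ht)
  have hs : 0 ≤ shiftDeriv φ' ‖Q‖ ‖P - Q‖ :=
    div_nonneg (mul_nonneg (hφ.deriv_nonneg_s14 (by positivity)) (norm_nonneg _)) (by positivity)
  rcases le_or_gt (2 * ‖P - Q‖) ‖Q‖ with hnear | hfar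
  · refine (norm_sub_le_shiftDeriv_of_two_mul_le (ψ' := fun t => cf * φ'' t) hc₂.le hg hD2
      hψ_mono hψ_nonneg (fun t ht => by nlinarith [(hcomp t ht).2]) hnear).trans ?_
    rw [shiftDeriv_const_mul]
    nlinarith [mul_nonneg hcf.le hs]
  · refine (norm_sub_le_shiftDeriv_of_lt_two_mul (ψ' := fun t => cf * φ'' t) hg
      (hf₁.continuous_fderiv one_ne_zero).continuousAt (fun t ht => (hφ' t ht).const_mul cf)
      hψ_mono hψ_nonneg hD2 hfar).trans ?_
    rw [shiftDeriv_const_mul]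
    nlinarith [mul_nonneg (mul_nonneg hcf.le hc₂.le) hs]

/-- If `|D²f(Q)| ≤ c₁ φ''(|Q|)` for `Q ≠ 0`, then
`|Df(Q) − Df(P)| ≤ c φ'_{|Q|}(|P−Q|)` for all `P, Q`, with `c` depending only on
`c₁` and the characteristics of `φ`. -/
theorem Df_difference_estimate (c₁ c₂ cf : ℝ) (hc₁ : 0 < c₁) (hc₂ : 0 < c₂)
    (hcf : 0 < cf) :
    ∃ c : ℝ, 0 < c ∧
      ∀ (N n : ℕ) (φ φ' φ'' : ℝ → ℝ), IsNFunction φ φ' →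
        (∀ t > (0:ℝ), HasDerivAt φ' (φ'' t) t) →
        (∀ t > (0:ℝ), ContinuousAt φ'' t) →
        (∀ t > (0:ℝ), c₁ * φ' t ≤ t * φ'' t ∧ t * φ'' t ≤ c₂ * φ' t) →
        ∀ f : EuclideanSpace ℝ (Fin N × Fin n) → ℝ,
          ContDiff ℝ 1 f →
          ContDiffOn ℝ 2 f {(0 : EuclideanSpace ℝ (Fin N × Fin n))}ᶜ →
          (∀ Q : EuclideanSpace ℝ (Fin N × Fin n), Q ≠ 0 →
            ‖fderiv ℝ (fderiv ℝ f) Q‖ ≤ cf * φ'' ‖Q‖) →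
          ∀ P Q : EuclideanSpace ℝ (Fin N × Fin n),
            ‖fderiv ℝ f Q - fderiv ℝ f P‖ ≤ c * shiftDeriv φ' ‖Q‖ ‖P - Q‖ :=
  Df_difference_estimate_general c₁ c₂ cf hc₂ hcf
end

section
/- Let φ be an N-function satisfying Assumption (φ C¹ on [0,∞), C² on (0,∞), φ'(t) ∼ tφ''(t)) and let B ⊂ ℝⁿ be a ball. There exists δ > 0, depending only on the characteristics of φ, such that for every u ∈ W^{1,φ}(B; ℝ^N): if ⨍_B |V(∇u) − ⟨V(∇u)⟩_B|² dx ≤ δ ⨍_B |V(∇u)|² dx, then ⨍_B |V(∇u)|² dx ≤ 4 |V(⟨∇u⟩_B)|² and ⨍_B |V(∇u) − ⟨V(∇u)⟩_B|² dx ≤ 4δ |V(⟨∇u⟩_B)|². -/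
open Set Filter MeasureTheory Metric

noncomputable def Vfn {E : Type*} [NormedAddCommGroup E] [NormedSpace ℝ E]
    (φ' : ℝ → ℝ) (Q : E) : E :=
  Real.sqrt (φ' ‖Q‖ / ‖Q‖) • Q

/-!
Write `f = V(∇u)`, `m = ⟨f⟩_B` and `E = ⨍_B |f|²`. The excess equals `E - |m|²`, so smallness
says that `|m|² ≥ (1 - δ) E`, and by Chebyshev some `Q = ∇u(x₀)` has `|V(Q) - m| ≤ η √E`.
The key pointwise bound is `η² E |W - Q| ≲ η³ E |Q| + |Q| |V(W) - m|²`. Where `V(W)` is close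
to `m`, the vectors `W` and `Q` point in the directions of `V(W)` and `V(Q)`, and have close
lengths because `|V(W)|² = |W| φ'(|W|)` with `φ'` increasing; elsewhere the same monotonicity
gives `|W| ≲ |Q| (1 + |V(W)|² / |V(Q)|²)`.
Averaging with `δ = η³` gives `|⟨∇u⟩_B - Q| ≤ 20 η |Q|`. Finally `t φ''(t) ≤ c₂ φ'(t)` yields
`φ'(λ t) ≥ λ^{c₂} φ'(t)` for `λ ≤ 1`, so with `(1 - 20 η)^{1 + c₂} = 1/2` we get
`|V(⟨∇u⟩_B)|² ≥ |V(Q)|² / 2 ≥ E / 4`.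
-/

open NormedSpace

section Normalize
variable {V : Type*} [NormedAddCommGroup V] [NormedSpace ℝ V]

lemma norm_normalize_le (x : V) : ‖normalize x‖ ≤ 1 := by
  rcases eq_or_ne x 0 with rfl | hx
  · simp
  · exact (norm_normalize hx).le

lemma norm_normalize_sub_normalize_le {x : V} (hx : x ≠ 0) (y : V) :
    ‖normalize x - normalize y‖ ≤ 2 * ‖x - y‖ / ‖x‖ := by
  have hx' : 0 < ‖x‖ := norm_pos_iff.2 hx
  have hsplit : normalize x - normalize y = ‖x‖⁻¹ • ((x - y) + (‖y‖ - ‖x‖) • normalize y) := by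
    rw [sub_smul, norm_smul_normalize, smul_add, smul_sub, smul_sub, smul_smul,
      inv_mul_cancel₀ hx'.ne', one_smul, NormedSpace.normalize]
    abel
  have hrest : ‖(‖y‖ - ‖x‖) • normalize y‖ ≤ ‖x - y‖ := by
    rw [norm_smul, Real.norm_eq_abs, abs_sub_comm]
    exact mul_le_of_le_one_right (abs_nonneg _) (norm_normalize_le y) |>.trans
      (abs_norm_sub_norm_le x y)
  rw [hsplit, norm_smul, norm_inv, norm_norm, inv_mul_eq_div]
  gcongr
  linarith [norm_add_le (x - y) ((‖y‖ - ‖x‖) • normalize y)]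

lemma norm_sub_le_abs_norm_sub_add (x y : V) :
    ‖x - y‖ ≤ |‖x‖ - ‖y‖| + ‖y‖ * ‖normalize x - normalize y‖ := by
  have hsplit : x - y = (‖x‖ - ‖y‖) • normalize x + ‖y‖ • (normalize x - normalize y) := by
    rw [sub_smul, smul_sub, norm_smul_normalize, norm_smul_normalize]; abel
  calc ‖x - y‖ ≤ ‖(‖x‖ - ‖y‖) • normalize x‖ + ‖‖y‖ • (normalize x - normalize y)‖ :=
        hsplit ▸ norm_add_le _ _
    _ ≤ |‖x‖ - ‖y‖| + ‖y‖ * ‖normalize x - normalize y‖ := by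
        rw [norm_smul, norm_smul, Real.norm_eq_abs, norm_norm]
        gcongr
        exact mul_le_of_le_one_right (abs_nonneg _) (norm_normalize_le x)

end Normalize

section Vfn
variable {F : Type*} [NormedAddCommGroup F] [NormedSpace ℝ F] {φ' : ℝ → ℝ}

lemma norm_Vfn_sq (hpos : ∀ t > 0, 0 < φ' t) (Q : F) :
    ‖Vfn φ' Q‖ ^ 2 = ‖Q‖ * φ' ‖Q‖ := by
  rcases eq_or_ne Q 0 with rfl | hQ
  · simp [Vfn]
  · have hQ' : 0 < ‖Q‖ := norm_pos_iff.2 hQ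
    rw [Vfn, norm_smul, Real.norm_of_nonneg (Real.sqrt_nonneg _), mul_pow,
      Real.sq_sqrt (div_pos (hpos _ hQ') hQ').le]
    field_simp

lemma normalize_Vfn (hpos : ∀ t > 0, 0 < φ' t) (Q : F) :
    normalize (Vfn φ' Q) = normalize Q := by
  rcases eq_or_ne Q 0 with rfl | hQ
  · simp [Vfn]
  · have hQ' : 0 < ‖Q‖ := norm_pos_iff.2 hQ
    exact normalize_smul_of_pos (Real.sqrt_pos.2 (div_pos (hpos _ hQ') hQ')) Q

end Vfn

section Monotone
variable {φ' : ℝ → ℝ} (hmono : MonotoneOn φ' (Ioi 0)) (hpos : ∀ t > 0, 0 < φ' t)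
include hmono hpos

lemma abs_sub_mul_le_mul_abs_sub {w a : ℝ} (hw : 0 ≤ w) (ha : 0 ≤ a) :
    |w - a| * (a * φ' a) ≤ a * |w * φ' w - a * φ' a| := by
  rcases ha.eq_or_lt with rfl | ha
  · simp
  rcases hw.eq_or_lt with rfl | hw
  · have := hpos a ha
    rw [zero_sub, zero_mul, zero_sub, abs_neg, abs_neg, abs_of_pos ha,
      abs_of_pos (by positivity)]
  rcases le_total a w with haw | hwa
  · have := hmono ha hw haw
    rw [abs_of_nonneg (sub_nonneg.2 haw)]
    refine le_trans ?_ (mul_le_mul_of_nonneg_left (le_abs_self _) ha.le)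
    nlinarith [mul_nonneg (mul_nonneg ha.le hw.le) (sub_nonneg.2 this)]
  · have := hmono hw ha hwa
    rw [abs_of_nonpos (sub_nonpos.2 hwa)]
    refine le_trans ?_ (mul_le_mul_of_nonneg_left (neg_le_abs _) ha.le)
    nlinarith [mul_nonneg (mul_nonneg ha.le hw.le) (sub_nonneg.2 this)]

lemma mul_mul_le_mul_add_mul {w a : ℝ} (hw : 0 ≤ w) (ha : 0 ≤ a) :
    w * (a * φ' a) ≤ a * (a * φ' a + w * φ' w) := by
  rcases ha.eq_or_lt with rfl | ha
  · simp
  have hθw : 0 ≤ w * φ' w := by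
    rcases hw.eq_or_lt with rfl | hw
    · simp
    · exact (mul_pos hw (hpos w hw)).le
  rcases le_total w a with hwa | haw
  · nlinarith [mul_le_mul_of_nonneg_right hwa (mul_pos ha (hpos a ha)).le,
      mul_nonneg ha.le hθw]
  · have := hmono ha (ha.trans_le haw) haw
    nlinarith [mul_nonneg (mul_nonneg ha.le hw) (sub_nonneg.2 this),
      (mul_pos ha (mul_pos ha (hpos a ha))).le]

end Monotone

lemma rpow_mul_le_of_mul_deriv_le {φ' φ'' : ℝ → ℝ} {c : ℝ}
    (hd : ∀ t > 0, HasDerivAt φ' (φ'' t) t) (hpos : ∀ t > 0, 0 < φ' t)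
    (hub : ∀ t > 0, t * φ'' t ≤ c * φ' t) {k t : ℝ} (hk : 0 < k) (hk1 : k ≤ 1) (ht : 0 < t) :
    k ^ c * φ' t ≤ φ' (k * t) := by
  set g : ℝ → ℝ := fun u => Real.log (φ' u) - c * Real.log u
  have hg : ∀ u > 0, HasDerivAt g (φ'' u / φ' u - c * u⁻¹) u := fun u hu =>
    ((hd u hu).log (hpos u hu).ne').sub ((Real.hasDerivAt_log hu.ne').const_mul c)
  have hanti : AntitoneOn g (Ioi 0) := by
    refine antitoneOn_of_deriv_nonpos (convex_Ioi 0)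
      (fun u hu => (hg u hu).continuousAt.continuousWithinAt)
      (fun u hu => (hg u (interior_subset hu)).differentiableAt.differentiableWithinAt)
      (fun u hu => ?_)
    rw [interior_Ioi, mem_Ioi] at hu
    rw [(hg u hu).deriv, sub_nonpos, div_le_iff₀ (hpos u hu)]
    calc φ'' u = u⁻¹ * (u * φ'' u) := by field_simp [hu.ne']
      _ ≤ u⁻¹ * (c * φ' u) := mul_le_mul_of_nonneg_left (hub u hu) (inv_pos.2 hu).le
      _ = c * u⁻¹ * φ' u := by ring
  have hkt : 0 < k * t := mul_pos hk ht
  have hle : g t ≤ g (k * t) := hanti hkt ht (mul_le_of_le_one_left ht.le hk1)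
  simp only [g, Real.log_mul hk.ne' ht.ne'] at hle
  calc k ^ c * φ' t = Real.exp (Real.log k * c + Real.log (φ' t)) := by
        rw [Real.exp_add, Real.exp_log (hpos t ht), Real.rpow_def_of_pos hk]
    _ ≤ Real.exp (Real.log (φ' (k * t))) := Real.exp_le_exp.2 (by linarith)
    _ = φ' (k * t) := Real.exp_log (hpos _ hkt)

lemma rpow_mul_mul_le_of_mul_deriv_le {φ' φ'' : ℝ → ℝ} {c : ℝ} (hmono : MonotoneOn φ' (Ioi 0))
    (hd : ∀ t > 0, HasDerivAt φ' (φ'' t) t) (hpos : ∀ t > 0, 0 < φ' t)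
    (hub : ∀ t > 0, t * φ'' t ≤ c * φ' t) {k a p : ℝ} (hk : 0 < k) (hk1 : k ≤ 1) (ha : 0 < a)
    (hp : k * a ≤ p) : k ^ (1 + c) * (a * φ' a) ≤ p * φ' p := by
  have hka : 0 < k * a := mul_pos hk ha
  calc k ^ (1 + c) * (a * φ' a) = k * a * (k ^ c * φ' a) := by
        rw [Real.rpow_add hk, Real.rpow_one]; ring
    _ ≤ k * a * φ' (k * a) := by
        gcongr; exact rpow_mul_le_of_mul_deriv_le hd hpos hub hk hk1 ha
    _ ≤ p * φ' p :=
        mul_le_mul hp (hmono hka (hka.trans_le hp) hp) (hpos _ hka).le (hka.trans_le hp).le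

section Pointwise
variable {F : Type*} [NormedAddCommGroup F] [NormedSpace ℝ F] {φ' : ℝ → ℝ}
  (hmono : MonotoneOn φ' (Ioi 0)) (hpos : ∀ t > 0, 0 < φ' t)
  {s η : ℝ} {m Q W : F} (hs : 0 < s) (hη : 0 ≤ η) (hη1 : η ≤ 1 / 4) (hm : ‖m‖ ≤ s)
  (hVQ : 3 / 4 * s ≤ ‖Vfn φ' Q‖)
include hmono hpos hs hη hη1 hm hVQ

lemma norm_sub_le_of_norm_Vfn_sub_le (hQ : ‖Vfn φ' Q - m‖ ≤ η * s)
    (hW : ‖Vfn φ' W - m‖ ≤ η * s) : ‖W - Q‖ ≤ 15 * η * ‖Q‖ := by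
  have hVV : ‖Vfn φ' Q - Vfn φ' W‖ ≤ 2 * η * s := by
    linarith [norm_sub_le_norm_sub_add_norm_sub (Vfn φ' Q) m (Vfn φ' W), norm_sub_rev m (Vfn φ' W)]
  have hq : ‖Vfn φ' Q‖ ≤ (1 + η) * s := by linarith [norm_le_norm_add_norm_sub' (Vfn φ' Q) m]
  have hv : ‖Vfn φ' W‖ ≤ (1 + η) * s := by linarith [norm_le_norm_add_norm_sub' (Vfn φ' W) m]
  have hq0 : Vfn φ' Q ≠ 0 := norm_pos_iff.1 (by linarith)
  have hdir : ‖normalize W - normalize Q‖ ≤ 16 / 3 * η := by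
    rw [← normalize_Vfn hpos W, ← normalize_Vfn hpos Q, norm_sub_rev]
    refine (norm_normalize_sub_normalize_le hq0 _).trans ?_
    rw [div_le_iff₀ (by positivity)]
    nlinarith
  have hmag : |‖W‖ - ‖Q‖| * ‖Vfn φ' Q‖ ^ 2 ≤ ‖Q‖ * |‖Vfn φ' W‖ ^ 2 - ‖Vfn φ' Q‖ ^ 2| := by
    rw [norm_Vfn_sq hpos, norm_Vfn_sq hpos]
    exact abs_sub_mul_le_mul_abs_sub hmono hpos (norm_nonneg _) (norm_nonneg _)
  have hvq : |‖Vfn φ' W‖ ^ 2 - ‖Vfn φ' Q‖ ^ 2| ≤ 5 * η * s ^ 2 := by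
    rw [sq_sub_sq, abs_mul, abs_of_nonneg (by positivity : 0 ≤ ‖Vfn φ' W‖ + ‖Vfn φ' Q‖),
      abs_sub_comm]
    have := (abs_norm_sub_norm_le (Vfn φ' Q) (Vfn φ' W)).trans hVV
    nlinarith [mul_le_mul (add_le_add hv hq) this (abs_nonneg _) (by positivity),
      mul_nonneg (mul_nonneg hη (sq_nonneg s)) (by linarith : (0 : ℝ) ≤ 1 - 4 * η)]
  have hmag' : |‖W‖ - ‖Q‖| ≤ 80 / 9 * η * ‖Q‖ := by
    have hq2 : 9 / 16 * s ^ 2 ≤ ‖Vfn φ' Q‖ ^ 2 := by nlinarith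
    refine le_of_mul_le_mul_right ?_ (by positivity : 0 < 9 / 16 * s ^ 2)
    calc |‖W‖ - ‖Q‖| * (9 / 16 * s ^ 2) ≤ |‖W‖ - ‖Q‖| * ‖Vfn φ' Q‖ ^ 2 := by gcongr
      _ ≤ ‖Q‖ * (5 * η * s ^ 2) := hmag.trans (by gcongr)
      _ = 80 / 9 * η * ‖Q‖ * (9 / 16 * s ^ 2) := by ring
  calc ‖W - Q‖ ≤ |‖W‖ - ‖Q‖| + ‖Q‖ * ‖normalize W - normalize Q‖ :=
        norm_sub_le_abs_norm_sub_add W Q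
    _ ≤ 80 / 9 * η * ‖Q‖ + ‖Q‖ * (16 / 3 * η) := by gcongr
    _ ≤ 15 * η * ‖Q‖ := by nlinarith [norm_nonneg Q]

lemma sq_mul_norm_sub_le_of_lt_norm_Vfn_sub (hW : η * s < ‖Vfn φ' W - m‖) :
    η ^ 2 * s ^ 2 * ‖W - Q‖ ≤ 5 * ‖Q‖ * ‖Vfn φ' W - m‖ ^ 2 := by
  set ρ := ‖Vfn φ' W - m‖
  have hq2 : 9 / 16 * s ^ 2 ≤ ‖Vfn φ' Q‖ ^ 2 := by nlinarith
  have hθ : ‖W‖ * ‖Vfn φ' Q‖ ^ 2 ≤ ‖Q‖ * (‖Vfn φ' Q‖ ^ 2 + ‖Vfn φ' W‖ ^ 2) := by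
    rw [norm_Vfn_sq hpos, norm_Vfn_sq hpos]
    exact mul_mul_le_mul_add_mul hmono hpos (norm_nonneg _) (norm_nonneg _)
  have hηv : η * ‖Vfn φ' W‖ ≤ 5 / 4 * ρ := by
    have hv : ‖Vfn φ' W‖ ≤ s + ρ := by linarith [norm_le_norm_add_norm_sub' (Vfn φ' W) m]
    nlinarith [mul_le_mul_of_nonneg_left hv hη,
      mul_le_mul_of_nonneg_right hη1 (norm_nonneg (Vfn φ' W - m))]
  have hηs : (η * s) ^ 2 ≤ ρ ^ 2 := pow_le_pow_left₀ (by positivity) hW.le 2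
  have hηv2 : (η * ‖Vfn φ' W‖) ^ 2 ≤ (5 / 4 * ρ) ^ 2 := pow_le_pow_left₀ (by positivity) hηv 2
  refine le_of_mul_le_mul_right ?_ (pow_pos (by linarith) 2 : 0 < ‖Vfn φ' Q‖ ^ 2)
  calc η ^ 2 * s ^ 2 * ‖W - Q‖ * ‖Vfn φ' Q‖ ^ 2
      ≤ η ^ 2 * s ^ 2 * (‖W‖ * ‖Vfn φ' Q‖ ^ 2 + ‖Q‖ * ‖Vfn φ' Q‖ ^ 2) := by
        rw [← add_mul, ← mul_assoc]; gcongr; exact norm_sub_le W Q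
    _ ≤ ‖Q‖ * (2 * (η * s) ^ 2 * ‖Vfn φ' Q‖ ^ 2 + (η * ‖Vfn φ' W‖) ^ 2 * s ^ 2) := by
        nlinarith [mul_le_mul_of_nonneg_left hθ (by positivity : 0 ≤ η ^ 2 * s ^ 2)]
    _ ≤ ‖Q‖ * (2 * ρ ^ 2 * ‖Vfn φ' Q‖ ^ 2 + (5 / 4 * ρ) ^ 2 * (16 / 9 * ‖Vfn φ' Q‖ ^ 2)) := by
        gcongr; linarith
    _ ≤ 5 * ‖Q‖ * ρ ^ 2 * ‖Vfn φ' Q‖ ^ 2 := by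
        nlinarith [mul_nonneg (mul_nonneg (norm_nonneg Q) (sq_nonneg ρ)) (sq_nonneg ‖Vfn φ' Q‖)]

lemma sq_mul_norm_sub_le (hQ : ‖Vfn φ' Q - m‖ ≤ η * s) (W : F) :
    η ^ 2 * s ^ 2 * ‖W - Q‖ ≤ 15 * η ^ 3 * s ^ 2 * ‖Q‖ + 5 * ‖Q‖ * ‖Vfn φ' W - m‖ ^ 2 := by
  rcases le_or_gt ‖Vfn φ' W - m‖ (η * s) with hW | hW
  · calc η ^ 2 * s ^ 2 * ‖W - Q‖ ≤ η ^ 2 * s ^ 2 * (15 * η * ‖Q‖) := by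
          gcongr; exact norm_sub_le_of_norm_Vfn_sub_le hmono hpos hs hη hη1 hm hVQ hQ hW
      _ ≤ _ := by nlinarith [norm_nonneg Q, sq_nonneg ‖Vfn φ' W - m‖]
  · exact (sq_mul_norm_sub_le_of_lt_norm_Vfn_sub hmono hpos hs hη hη1 hm hVQ hW).trans
      (le_add_of_nonneg_left (by positivity))

end Pointwise

section Integral
variable {α F : Type*} [MeasurableSpace α] {μ : Measure α} [IsProbabilityMeasure μ]
  [NormedAddCommGroup F] [NormedSpace ℝ F] [CompleteSpace F]

lemma norm_integral_sub_le {g : α → F} (hg : Integrable g μ) (Q : F) :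
    ‖∫ x, g x ∂μ - Q‖ ≤ ∫ x, ‖g x - Q‖ ∂μ := by
  have : ∫ x, g x ∂μ - Q = ∫ x, (g x - Q) ∂μ := by
    rw [integral_sub hg (integrable_const Q), integral_const, probReal_univ, one_smul]
  rw [this]
  exact norm_integral_le_integral_norm _

lemma norm_integral_sub_le_of_excess_le {φ' : ℝ → ℝ} (hmono : MonotoneOn φ' (Ioi 0))
    (hpos : ∀ t > 0, 0 < φ' t) {s η : ℝ} {m Q : F} (hs : 0 < s) (hη : 0 < η) (hη1 : η ≤ 1 / 4)
    (hm : ‖m‖ ≤ s) (hVQ : 3 / 4 * s ≤ ‖Vfn φ' Q‖) (hQ : ‖Vfn φ' Q - m‖ ≤ η * s)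
    {du : α → F} (hdu : Integrable du μ) (hexc : Integrable (fun x => ‖Vfn φ' (du x) - m‖ ^ 2) μ)
    (hsmall : ∫ x, ‖Vfn φ' (du x) - m‖ ^ 2 ∂μ ≤ η ^ 3 * s ^ 2) :
    ‖∫ x, du x ∂μ - Q‖ ≤ 20 * η * ‖Q‖ := by
  have hint : ∫ x, η ^ 2 * s ^ 2 * ‖du x - Q‖ ∂μ ≤
      ∫ x, (15 * η ^ 3 * s ^ 2 * ‖Q‖ + 5 * ‖Q‖ * ‖Vfn φ' (du x) - m‖ ^ 2) ∂μ :=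
    integral_mono ((hdu.sub (integrable_const Q)).norm.const_mul _)
      ((integrable_const _).add (hexc.const_mul _))
      fun x => sq_mul_norm_sub_le hmono hpos hs hη.le hη1 hm hVQ hQ (du x)
  rw [integral_const_mul, integral_add (integrable_const _) (hexc.const_mul _),
    integral_const_mul (5 * ‖Q‖), integral_const, probReal_univ, one_smul] at hint
  refine le_of_mul_le_mul_left ?_ (by positivity : 0 < η ^ 2 * s ^ 2)
  nlinarith [mul_le_mul_of_nonneg_left (norm_integral_sub_le hdu Q)
      (by positivity : 0 ≤ η ^ 2 * s ^ 2),
    mul_le_mul_of_nonneg_left hsmall (by positivity : 0 ≤ 5 * ‖Q‖)]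

end Integral

section InnerProduct
variable {α F : Type*} [MeasurableSpace α] {μ : Measure α} [IsProbabilityMeasure μ]
  [NormedAddCommGroup F] [InnerProductSpace ℝ F] [CompleteSpace F]

lemma integral_norm_sub_integral_sq {f : α → F} (hf : Integrable f μ)
    (hf2 : Integrable (fun x => ‖f x‖ ^ 2) μ) :
    ∫ x, ‖f x - ∫ y, f y ∂μ‖ ^ 2 ∂μ = ∫ x, ‖f x‖ ^ 2 ∂μ - ‖∫ x, f x ∂μ‖ ^ 2 := by
  set m := ∫ y, f y ∂μ
  have hinner : Integrable (fun x => 2 * inner ℝ (f x) m) μ := (hf.inner_const m).const_mul 2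
  have hm : ∫ x, 2 * inner ℝ (f x) m ∂μ = 2 * ‖m‖ ^ 2 := by
    simp_rw [real_inner_comm m]
    rw [integral_const_mul, integral_inner hf, real_inner_self_eq_norm_sq]
  have hsub : Integrable (fun x => ‖f x‖ ^ 2 - 2 * inner ℝ (f x) m) μ := hf2.sub hinner
  simp_rw [norm_sub_sq_real]
  rw [integral_add hsub (integrable_const _), integral_sub hf2 hinner, hm,
    integral_const, probReal_univ, one_smul]
  ring

theorem integral_norm_Vfn_sq_le_of_excess_le {φ' φ'' : ℝ → ℝ} {c η : ℝ}
    (hmono : MonotoneOn φ' (Ioi 0)) (hpos : ∀ t > 0, 0 < φ' t)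
    (hd : ∀ t > 0, HasDerivAt φ' (φ'' t) t) (hub : ∀ t > 0, t * φ'' t ≤ c * φ' t)
    (hη : 0 < η) (hη1 : 20 * η < 1) (hηc : 1 / 2 ≤ (1 - 20 * η) ^ (1 + c))
    {du : α → F} (hdu : Integrable du μ) (hV : Integrable (fun x => Vfn φ' (du x)) μ)
    (hV2 : Integrable (fun x => ‖Vfn φ' (du x)‖ ^ 2) μ)
    (hexc : Integrable (fun x => ‖Vfn φ' (du x) - ∫ y, Vfn φ' (du y) ∂μ‖ ^ 2) μ)
    (hsmall : ∫ x, ‖Vfn φ' (du x) - ∫ y, Vfn φ' (du y) ∂μ‖ ^ 2 ∂μ ≤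
      η ^ 3 * ∫ x, ‖Vfn φ' (du x)‖ ^ 2 ∂μ) :
    ∫ x, ‖Vfn φ' (du x)‖ ^ 2 ∂μ ≤ 4 * ‖Vfn φ' (∫ x, du x ∂μ)‖ ^ 2 := by
  set m := ∫ y, Vfn φ' (du y) ∂μ
  have hvar := integral_norm_sub_integral_sq hV hV2
  have hexc0 : 0 ≤ ∫ x, ‖Vfn φ' (du x) - m‖ ^ 2 ∂μ := integral_nonneg fun _ => sq_nonneg _
  rcases (integral_nonneg fun _ => sq_nonneg _ : 0 ≤ ∫ x, ‖Vfn φ' (du x)‖ ^ 2 ∂μ).eq_or_lt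
    with hE | hE
  · rw [← hE]; positivity
  obtain ⟨s, hs, hsE⟩ : ∃ s, 0 < s ∧ s ^ 2 = ∫ x, ‖Vfn φ' (du x)‖ ^ 2 ∂μ :=
    ⟨_, Real.sqrt_pos.2 hE, Real.sq_sqrt hE.le⟩
  rw [← hsE] at hvar hsmall ⊢
  have hm : ‖m‖ ≤ s := by nlinarith [norm_nonneg m]
  have hm' : (1 - η ^ 3) * s ≤ ‖m‖ := by
    nlinarith [mul_le_mul_of_nonneg_left hm (norm_nonneg m)]
  obtain ⟨x₀, hx₀⟩ := exists_le_integral hexc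
  set Q := du x₀
  have hQ : ‖Vfn φ' Q - m‖ ≤ η * s := by
    refine (pow_le_pow_iff_left₀ (norm_nonneg _) (by positivity) two_ne_zero).1 ?_
    nlinarith [pow_le_pow_left₀ hη.le (by linarith : η ≤ 1) 3]
  have hVQ : 3 / 4 * s ≤ ‖Vfn φ' Q‖ := by
    have hη3 : η ^ 3 ≤ η := pow_le_of_le_one hη.le (by linarith) three_ne_zero
    nlinarith [norm_le_norm_add_norm_sub' m (Vfn φ' Q), norm_sub_rev m (Vfn φ' Q),
      mul_le_mul_of_nonneg_right hη3 hs.le, mul_le_mul_of_nonneg_right hη1.le hs.le]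
  have hPQ : ‖∫ x, du x ∂μ - Q‖ ≤ 20 * η * ‖Q‖ :=
    norm_integral_sub_le_of_excess_le hmono hpos hs hη (by linarith) hm hVQ hQ hdu hexc hsmall
  have hQ0 : 0 < ‖Q‖ := norm_pos_iff.2 fun h => by simp [h, Vfn] at hVQ; linarith
  have hP : (1 - 20 * η) * ‖Q‖ ≤ ‖∫ x, du x ∂μ‖ := by
    linarith [norm_le_norm_add_norm_sub' Q (∫ x, du x ∂μ), norm_sub_rev Q (∫ x, du x ∂μ)]
  have hθ := rpow_mul_mul_le_of_mul_deriv_le hmono hd hpos hub (by linarith) (by linarith) hQ0 hP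
  rw [← norm_Vfn_sq hpos, ← norm_Vfn_sq hpos] at hθ
  nlinarith [mul_le_mul_of_nonneg_right hηc (sq_nonneg ‖Vfn φ' Q‖)]

end InnerProduct

lemma exists_one_sub_mul_rpow_eq_half {c : ℝ} (hc : 0 < 1 + c) :
    ∃ η : ℝ, 0 < η ∧ 20 * η < 1 ∧ (1 - 20 * η) ^ (1 + c) = 1 / 2 := by
  set b : ℝ := (1 / 2) ^ (1 + c)⁻¹
  have hb : 0 < b := by positivity
  have hb1 : b < 1 := Real.rpow_lt_one (by norm_num) (by norm_num) (inv_pos.2 hc)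
  refine ⟨(1 - b) / 20, by linarith, by linarith, ?_⟩
  rw [show 1 - 20 * ((1 - b) / 20) = b by ring]
  exact Real.rpow_inv_rpow (by norm_num) hc.ne'

theorem average_norm_Vfn_sq_le_of_excess_le {α F : Type*} [MeasurableSpace α] {μ : Measure α}
    [IsFiniteMeasure μ] [NeZero μ] [NormedAddCommGroup F] [InnerProductSpace ℝ F]
    [CompleteSpace F] {φ' φ'' : ℝ → ℝ} {c η : ℝ}
    (hmono : MonotoneOn φ' (Ioi 0)) (hpos : ∀ t > 0, 0 < φ' t)
    (hd : ∀ t > 0, HasDerivAt φ' (φ'' t) t) (hub : ∀ t > 0, t * φ'' t ≤ c * φ' t)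
    (hη : 0 < η) (hη1 : 20 * η < 1) (hηc : 1 / 2 ≤ (1 - 20 * η) ^ (1 + c))
    {du : α → F} (hdu : Integrable du μ) (hV : Integrable (fun x => Vfn φ' (du x)) μ)
    (hV2 : Integrable (fun x => ‖Vfn φ' (du x)‖ ^ 2) μ)
    (hexc : Integrable (fun x => ‖Vfn φ' (du x) - ⨍ y, Vfn φ' (du y) ∂μ‖ ^ 2) μ)
    (hsmall : ⨍ x, ‖Vfn φ' (du x) - ⨍ y, Vfn φ' (du y) ∂μ‖ ^ 2 ∂μ ≤
      η ^ 3 * ⨍ x, ‖Vfn φ' (du x)‖ ^ 2 ∂μ) :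
    ⨍ x, ‖Vfn φ' (du x)‖ ^ 2 ∂μ ≤ 4 * ‖Vfn φ' (⨍ x, du x ∂μ)‖ ^ 2 := by
  have hμ : (μ univ)⁻¹ ≠ ⊤ := ENNReal.inv_ne_top.2 (Measure.measure_univ_ne_zero.2 (NeZero.ne μ))
  simp only [average_eq'] at hexc hsmall ⊢
  exact integral_norm_Vfn_sq_le_of_excess_le hmono hpos hd hub hη hη1 hηc (hdu.smul_measure hμ)
    (hV.smul_measure hμ) (hV2.smul_measure hμ) (hexc.smul_measure hμ) hsmall

theorem smallness_nondegenerate_general (c₁ c₂ : ℝ) (hc₂ : 0 < c₂) :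
    ∃ δ : ℝ, 0 < δ ∧
      ∀ (N n : ℕ) (φ φ' φ'' : ℝ → ℝ), IsNFunction φ φ' →
        (∀ t > (0:ℝ), HasDerivAt φ' (φ'' t) t) →
        (∀ t > (0:ℝ), ContinuousAt φ'' t) →
        (∀ t > (0:ℝ), c₁ * φ' t ≤ t * φ'' t ∧ t * φ'' t ≤ c₂ * φ' t) →
        ∀ (x₀ : EuclideanSpace ℝ (Fin n)) (r : ℝ), 0 < r →
        ∀ du : EuclideanSpace ℝ (Fin n) → EuclideanSpace ℝ (Fin N × Fin n),
          MeasureTheory.IntegrableOn du (Metric.ball x₀ r) →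
          MeasureTheory.IntegrableOn (fun x => φ ‖du x‖) (Metric.ball x₀ r) →
          MeasureTheory.IntegrableOn (fun x => Vfn φ' (du x)) (Metric.ball x₀ r) →
          MeasureTheory.IntegrableOn (fun x => ‖Vfn φ' (du x)‖ ^ 2) (Metric.ball x₀ r) →
          MeasureTheory.IntegrableOn
            (fun x => ‖Vfn φ' (du x) - ⨍ y in Metric.ball x₀ r, Vfn φ' (du y)‖ ^ 2)
            (Metric.ball x₀ r) →
          (⨍ x in Metric.ball x₀ r,
              ‖Vfn φ' (du x) - ⨍ y in Metric.ball x₀ r, Vfn φ' (du y)‖ ^ 2) ≤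
            δ * ⨍ x in Metric.ball x₀ r, ‖Vfn φ' (du x)‖ ^ 2 →
          ((⨍ x in Metric.ball x₀ r, ‖Vfn φ' (du x)‖ ^ 2) ≤
              4 * ‖Vfn φ' (⨍ x in Metric.ball x₀ r, du x)‖ ^ 2 ∧
            (⨍ x in Metric.ball x₀ r,
                ‖Vfn φ' (du x) - ⨍ y in Metric.ball x₀ r, Vfn φ' (du y)‖ ^ 2) ≤
              4 * δ * ‖Vfn φ' (⨍ x in Metric.ball x₀ r, du x)‖ ^ 2) := by
  obtain ⟨η, hη, hη1, hηc⟩ := exists_one_sub_mul_rpow_eq_half (by linarith : 0 < 1 + c₂)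
  refine ⟨η ^ 3, by positivity, ?_⟩
  intro N n φ φ' φ'' hφ hd _ hφ'' x₀ r hr du hdu _ hV hV2 hexc hsmall
  obtain ⟨-, -, hmono, -, -, hpos, -⟩ := hφ
  have : IsFiniteMeasure (volume.restrict (ball x₀ r)) :=
    isFiniteMeasure_restrict.2 measure_ball_lt_top.ne
  have : NeZero (volume.restrict (ball x₀ r)) :=
    ⟨by simpa using (measure_ball_pos volume x₀ hr).ne'⟩
  have hE := average_norm_Vfn_sq_le_of_excess_le (hmono.mono Ioi_subset_Ici_self) hpos hd
    (fun t ht => (hφ'' t ht).2) hη hη1 hηc.ge hdu hV hV2 hexc hsmall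
  refine ⟨hE, hsmall.trans ?_⟩
  linarith [mul_le_mul_of_nonneg_left hE (by positivity : 0 ≤ η ^ 3)]

/-- If the excess of `V(∇u)` over a ball `B` is `δ`-small compared to the average of
`|V(∇u)|²`, then `⨍_B |V(∇u)|² ≤ 4 |V(⟨∇u⟩_B)|²` and the excess is controlled by
`4δ |V(⟨∇u⟩_B)|²`; `δ` depends only on the characteristics of `φ`.
Here `du` stands for the (weak) gradient `∇u` of `u ∈ W^{1,φ}(B; ℝ^N)`. -/
theorem smallness_nondegenerate (c₁ c₂ : ℝ) (hc₁ : 0 < c₁) (hc₂ : 0 < c₂) :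
    ∃ δ : ℝ, 0 < δ ∧
      ∀ (N n : ℕ) (φ φ' φ'' : ℝ → ℝ), IsNFunction φ φ' →
        (∀ t > (0:ℝ), HasDerivAt φ' (φ'' t) t) →
        (∀ t > (0:ℝ), ContinuousAt φ'' t) →
        (∀ t > (0:ℝ), c₁ * φ' t ≤ t * φ'' t ∧ t * φ'' t ≤ c₂ * φ' t) →
        ∀ (x₀ : EuclideanSpace ℝ (Fin n)) (r : ℝ), 0 < r →
        ∀ du : EuclideanSpace ℝ (Fin n) → EuclideanSpace ℝ (Fin N × Fin n),
          MeasureTheory.IntegrableOn du (Metric.ball x₀ r) →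
          MeasureTheory.IntegrableOn (fun x => φ ‖du x‖) (Metric.ball x₀ r) →
          MeasureTheory.IntegrableOn (fun x => Vfn φ' (du x)) (Metric.ball x₀ r) →
          MeasureTheory.IntegrableOn (fun x => ‖Vfn φ' (du x)‖ ^ 2) (Metric.ball x₀ r) →
          MeasureTheory.IntegrableOn
            (fun x => ‖Vfn φ' (du x) - ⨍ y in Metric.ball x₀ r, Vfn φ' (du y)‖ ^ 2)
            (Metric.ball x₀ r) →
          (⨍ x in Metric.ball x₀ r,
              ‖Vfn φ' (du x) - ⨍ y in Metric.ball x₀ r, Vfn φ' (du y)‖ ^ 2) ≤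
            δ * ⨍ x in Metric.ball x₀ r, ‖Vfn φ' (du x)‖ ^ 2 →
          ((⨍ x in Metric.ball x₀ r, ‖Vfn φ' (du x)‖ ^ 2) ≤
              4 * ‖Vfn φ' (⨍ x in Metric.ball x₀ r, du x)‖ ^ 2 ∧
            (⨍ x in Metric.ball x₀ r,
                ‖Vfn φ' (du x) - ⨍ y in Metric.ball x₀ r, Vfn φ' (du y)‖ ^ 2) ≤
              4 * δ * ‖Vfn φ' (⨍ x in Metric.ball x₀ r, du x)‖ ^ 2) :=
  smallness_nondegenerate_general c₁ c₂ hc₂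
end
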